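/- arXiv:2503.06466 — 4 statements merged into one kernel-verified Lean document; each statement's English description precedes it below -/
import Mathlib

section
/- Let k ≥ 3 and g ≥ 3, and let Γ₁ and Γ₂ be disjoint k-regular graphs of girth at least g, of orders n₁ and n₂ respectively, with edges u₁v₁ in Γ₁ and u₂v₂ in Γ₂. Then the graph obtained from their disjoint union by deleting the edges u₁v₁ and u₂v₂ and adding the edges u₁u₂ and v₁v₂ is k-regular of order n₁+n₂ and has girth at least g. -/
open SimpleGraph

namespace Stmt1Aux

variable {V W : Type*} {G : SimpleGraph V}

lemma bool_ne_iff {a b c : Bool} (h : ¬ a = b) : (a = c) ↔ ¬ (b = c) := by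
  cases a <;> cases b <;> cases c <;> simp_all

lemma end_mem_tail_support {a b : V} (w : G.Walk a b) (h : a ≠ b) : b ∈ w.support.tail := by
  cases w with
  | nil => exact absurd rfl h
  | cons h' p => simpa using p.end_mem_support

lemma cycle_decomp_paths [DecidableEq V] {u x : V} {c : G.Walk u u} (hc : c.IsCycle)
    (h : x ∈ c.support) (hne : x ≠ u) :
    (c.takeUntil x h).IsPath ∧ (c.dropUntil x h).IsPath := by
  have hspec := c.take_spec h
  have hsupp : c.support.tail
      = (c.takeUntil x h).support.tail ++ (c.dropUntil x h).support.tail := by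
    conv_lhs => rw [← hspec]
    rw [SimpleGraph.Walk.tail_support_append]
  have hnd := (c.isCycle_def.mp hc).2.2
  rw [hsupp, List.nodup_append'] at hnd
  obtain ⟨hnd1, hnd2, hdisj⟩ := hnd
  have hxT : x ∈ (c.takeUntil x h).support.tail :=
    end_mem_tail_support _ (Ne.symm hne)
  have huD : u ∈ (c.dropUntil x h).support.tail :=
    end_mem_tail_support _ hne
  constructor
  · rw [SimpleGraph.Walk.isPath_def, (c.takeUntil x h).support_eq_cons, List.nodup_cons]
    exact ⟨fun hu => hdisj hu huD, hnd1⟩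
  · rw [SimpleGraph.Walk.isPath_def, (c.dropUntil x h).support_eq_cons, List.nodup_cons]
    exact ⟨fun hx => hdisj hxT hx, hnd2⟩

lemma lift_walk {H : SimpleGraph W} {f : W → V}
    (hf : Function.Injective f) (hadj : ∀ a b, G.Adj (f a) (f b) → H.Adj a b) :
    ∀ {x y : V} (w : G.Walk x y), (∀ v ∈ w.support, ∃ c, v = f c) →
      ∀ {a b : W}, x = f a → y = f b →
      ∃ w' : H.Walk a b, w'.length = w.length ∧ w'.support.map f = w.support ∧
        w'.edges.map (Sym2.map f) = w.edges := by
  intro x y w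
  induction w with
  | nil =>
    intro _ a b ha hb
    obtain rfl : a = b := hf (ha ▸ hb)
    exact ⟨.nil, by simp [ha]⟩
  | @cons x z y h p ih =>
    intro hsup a b ha hb
    obtain ⟨c, hc⟩ : ∃ c, z = f c := hsup z (by simp)
    have hadj' : H.Adj a c := hadj _ _ (by rw [← ha, ← hc]; exact h)
    obtain ⟨p', hl, hs, he⟩ := ih (fun v hv => hsup v (by simp [hv])) hc hb
    refine ⟨.cons hadj' p', by simp [hl], by simp [hs, ← ha, ← hc], ?_⟩
    simp only [Walk.edges_cons, List.map_cons, he, Sym2.map_pair_eq, ← ha, ← hc]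

lemma isPath_of_lift {H : SimpleGraph W} {f : W → V} {a b : W} {w : G.Walk (f a) (f b)}
    {w' : H.Walk a b} (hs : w'.support.map f = w.support) (hp : w.IsPath) : w'.IsPath := by
  rw [Walk.isPath_def] at hp ⊢
  rw [← hs] at hp
  exact hp.of_map

lemma isCycle_of_lift {H : SimpleGraph W} {f : W → V} {a : W} {w : G.Walk (f a) (f a)}
    {w' : H.Walk a a} (hl : w'.length = w.length) (hs : w'.support.map f = w.support)
    (he : w'.edges.map (Sym2.map f) = w.edges) (hc : w.IsCycle) : w'.IsCycle := by
  rw [Walk.isCycle_def]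
  refine ⟨⟨?_⟩, ?_, ?_⟩
  · exact List.Nodup.of_map _ (he ▸ hc.isTrail.edges_nodup)
  · intro hnil
    have := hc.three_le_length
    rw [← hl, hnil] at this
    simp at this
  · have := (w.isCycle_def.mp hc).2.2
    rw [← hs, ← List.map_tail] at this
    exact this.of_map

end Stmt1Aux

/-- Amalgamating two disjoint `k`-regular graphs of girth at least `g` by swapping a pair of
edges yields a `k`-regular graph of order `n₁ + n₂` and girth at least `g`. -/
theorem stmt_1 {V₁ V₂ : Type*} [Fintype V₁] [Fintype V₂]
    (k g n₁ n₂ : ℕ) (hk : 3 ≤ k) (hg : 3 ≤ g)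
    (Γ₁ : SimpleGraph V₁) (Γ₂ : SimpleGraph V₂)
    (h₁reg : ∀ v, (Γ₁.neighborSet v).ncard = k) (h₂reg : ∀ v, (Γ₂.neighborSet v).ncard = k)
    (h₁g : (g : ℕ∞) ≤ Γ₁.egirth) (h₂g : (g : ℕ∞) ≤ Γ₂.egirth)
    (hn₁ : Fintype.card V₁ = n₁) (hn₂ : Fintype.card V₂ = n₂)
    (u₁ v₁ : V₁) (u₂ v₂ : V₂) (he₁ : Γ₁.Adj u₁ v₁) (he₂ : Γ₂.Adj u₂ v₂)
    (Γ : SimpleGraph (V₁ ⊕ V₂))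
    (hΓ : ∀ x y, Γ.Adj x y ↔
      ((∃ a b, x = Sum.inl a ∧ y = Sum.inl b ∧ Γ₁.Adj a b ∧ s(a, b) ≠ s(u₁, v₁)) ∨
       (∃ a b, x = Sum.inr a ∧ y = Sum.inr b ∧ Γ₂.Adj a b ∧ s(a, b) ≠ s(u₂, v₂)) ∨
       s(x, y) = s(Sum.inl u₁, Sum.inr u₂) ∨
       s(x, y) = s(Sum.inl v₁, Sum.inr v₂))) :
    (∀ x, (Γ.neighborSet x).ncard = k) ∧ Fintype.card (V₁ ⊕ V₂) = n₁ + n₂ ∧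
      (g : ℕ∞) ≤ Γ.egirth := by
  classical
  have huv₁ : u₁ ≠ v₁ := he₁.ne
  have huv₂ : u₂ ≠ v₂ := he₂.ne
  refine ⟨?_, by rw [Fintype.card_sum, hn₁, hn₂], ?_⟩
  · -- regularity
    intro x
    cases x with
    | inl a =>
      by_cases hau : a = u₁
      · subst hau
        have hset : Γ.neighborSet (Sum.inl a) =
            Sum.inl '' (Γ₁.neighborSet a \ {v₁}) ∪ {Sum.inr u₂} := by
          ext y
          simp only [mem_neighborSet, Set.mem_union, Set.mem_image, Set.mem_diff,
            Set.mem_singleton_iff]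
          constructor
          · intro h
            rcases (hΓ _ _).1 h with ⟨a', b, ha', hb, hadj, hne⟩ | ⟨a', b, ha', hb, hadj, hne⟩
              | h3 | h3
            · obtain rfl : a = a' := Sum.inl.inj ha'
              refine Or.inl ⟨b, ⟨hadj, fun hbv => hne ?_⟩, hb.symm⟩
              rw [hbv]
            · exact absurd ha' (by simp)
            · rw [Sym2.eq_iff] at h3
              rcases h3 with ⟨-, rfl⟩ | ⟨h3, -⟩
              · exact Or.inr rfl
              · exact absurd h3 (by simp)
            · rw [Sym2.eq_iff] at h3
              rcases h3 with ⟨h3, -⟩ | ⟨h3, -⟩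
              · exact absurd (Sum.inl.inj h3) huv₁
              · exact absurd h3 (by simp)
          · rintro (⟨b, ⟨hadj, hbv⟩, rfl⟩ | rfl)
            · refine (hΓ _ _).2 (Or.inl ⟨a, b, rfl, rfl, hadj, fun hs => ?_⟩)
              rw [Sym2.eq_iff] at hs
              rcases hs with ⟨-, rfl⟩ | ⟨rfl, -⟩
              · exact hbv rfl
              · exact huv₁ rfl
            · exact (hΓ _ _).2 (Or.inr (Or.inr (Or.inl rfl)))
        rw [hset, Set.ncard_union_eq (by simp), Set.ncard_image_of_injective _ Sum.inl_injective,
          Set.ncard_diff_singleton_of_mem ((Γ₁.mem_neighborSet _ _).2 he₁), h₁reg,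
          Set.ncard_singleton]
        omega
      · by_cases hav : a = v₁
        · subst hav
          have hset : Γ.neighborSet (Sum.inl a) =
              Sum.inl '' (Γ₁.neighborSet a \ {u₁}) ∪ {Sum.inr v₂} := by
            ext y
            simp only [mem_neighborSet, Set.mem_union, Set.mem_image, Set.mem_diff,
              Set.mem_singleton_iff]
            constructor
            · intro h
              rcases (hΓ _ _).1 h with ⟨a', b, ha', hb, hadj, hne⟩ | ⟨a', b, ha', hb, hadj, hne⟩
                | h3 | h3
              · obtain rfl : a = a' := Sum.inl.inj ha'
                refine Or.inl ⟨b, ⟨hadj, fun hbv => hne ?_⟩, hb.symm⟩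
                rw [hbv, Sym2.eq_swap]
              · exact absurd ha' (by simp)
              · rw [Sym2.eq_iff] at h3
                rcases h3 with ⟨h3, -⟩ | ⟨h3, -⟩
                · exact absurd (Sum.inl.inj h3).symm huv₁
                · exact absurd h3 (by simp)
              · rw [Sym2.eq_iff] at h3
                rcases h3 with ⟨-, rfl⟩ | ⟨h3, -⟩
                · exact Or.inr rfl
                · exact absurd h3 (by simp)
            · rintro (⟨b, ⟨hadj, hbv⟩, rfl⟩ | rfl)
              · refine (hΓ _ _).2 (Or.inl ⟨a, b, rfl, rfl, hadj, fun hs => ?_⟩)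
                rw [Sym2.eq_iff] at hs
                rcases hs with ⟨rfl, -⟩ | ⟨-, rfl⟩
                · exact huv₁ rfl
                · exact hbv rfl
              · exact (hΓ _ _).2 (Or.inr (Or.inr (Or.inr rfl)))
          rw [hset, Set.ncard_union_eq (by simp), Set.ncard_image_of_injective _ Sum.inl_injective,
            Set.ncard_diff_singleton_of_mem ((Γ₁.mem_neighborSet _ _).2 he₁.symm), h₁reg,
            Set.ncard_singleton]
          omega
        · have hset : Γ.neighborSet (Sum.inl a) = Sum.inl '' Γ₁.neighborSet a := by
            ext y
            simp only [mem_neighborSet, Set.mem_image]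
            constructor
            · intro h
              rcases (hΓ _ _).1 h with ⟨a', b, ha', hb, hadj, hne⟩ | ⟨a', b, ha', hb, hadj, hne⟩
                | h3 | h3
              · obtain rfl : a = a' := Sum.inl.inj ha'
                exact ⟨b, hadj, hb.symm⟩
              · exact absurd ha' (by simp)
              · rw [Sym2.eq_iff] at h3
                rcases h3 with ⟨h3, -⟩ | ⟨h3, -⟩
                · exact absurd (Sum.inl.inj h3) hau
                · exact absurd h3 (by simp)
              · rw [Sym2.eq_iff] at h3
                rcases h3 with ⟨h3, -⟩ | ⟨h3, -⟩
                · exact absurd (Sum.inl.inj h3) hav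
                · exact absurd h3 (by simp)
            · rintro ⟨b, hadj, rfl⟩
              refine (hΓ _ _).2 (Or.inl ⟨a, b, rfl, rfl, hadj, fun hs => ?_⟩)
              rw [Sym2.eq_iff] at hs
              rcases hs with ⟨rfl, -⟩ | ⟨rfl, -⟩
              · exact hau rfl
              · exact hav rfl
          rw [hset, Set.ncard_image_of_injective _ Sum.inl_injective, h₁reg]
    | inr a =>
      by_cases hau : a = u₂
      · subst hau
        have hset : Γ.neighborSet (Sum.inr a) =
            Sum.inr '' (Γ₂.neighborSet a \ {v₂}) ∪ {Sum.inl u₁} := by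
          ext y
          simp only [mem_neighborSet, Set.mem_union, Set.mem_image, Set.mem_diff,
            Set.mem_singleton_iff]
          constructor
          · intro h
            rcases (hΓ _ _).1 h with ⟨a', b, ha', hb, hadj, hne⟩ | ⟨a', b, ha', hb, hadj, hne⟩
              | h3 | h3
            · exact absurd ha' (by simp)
            · obtain rfl : a = a' := Sum.inr.inj ha'
              refine Or.inl ⟨b, ⟨hadj, fun hbv => hne ?_⟩, hb.symm⟩
              rw [hbv]
            · rw [Sym2.eq_iff] at h3
              rcases h3 with ⟨h3, -⟩ | ⟨-, rfl⟩
              · exact absurd h3 (by simp)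
              · exact Or.inr rfl
            · rw [Sym2.eq_iff] at h3
              rcases h3 with ⟨h3, -⟩ | ⟨h3, -⟩
              · exact absurd h3 (by simp)
              · exact absurd (Sum.inr.inj h3) huv₂
          · rintro (⟨b, ⟨hadj, hbv⟩, rfl⟩ | rfl)
            · refine (hΓ _ _).2 (Or.inr (Or.inl ⟨a, b, rfl, rfl, hadj, fun hs => ?_⟩))
              rw [Sym2.eq_iff] at hs
              rcases hs with ⟨-, rfl⟩ | ⟨rfl, -⟩
              · exact hbv rfl
              · exact huv₂ rfl
            · exact (hΓ _ _).2 (Or.inr (Or.inr (Or.inl (Sym2.eq_swap ..))))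
        rw [hset, Set.ncard_union_eq (by simp), Set.ncard_image_of_injective _ Sum.inr_injective,
          Set.ncard_diff_singleton_of_mem ((Γ₂.mem_neighborSet _ _).2 he₂), h₂reg,
          Set.ncard_singleton]
        omega
      · by_cases hav : a = v₂
        · subst hav
          have hset : Γ.neighborSet (Sum.inr a) =
              Sum.inr '' (Γ₂.neighborSet a \ {u₂}) ∪ {Sum.inl v₁} := by
            ext y
            simp only [mem_neighborSet, Set.mem_union, Set.mem_image, Set.mem_diff,
              Set.mem_singleton_iff]
            constructor
            · intro h
              rcases (hΓ _ _).1 h with ⟨a', b, ha', hb, hadj, hne⟩ | ⟨a', b, ha', hb, hadj, hne⟩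
                | h3 | h3
              · exact absurd ha' (by simp)
              · obtain rfl : a = a' := Sum.inr.inj ha'
                refine Or.inl ⟨b, ⟨hadj, fun hbv => hne ?_⟩, hb.symm⟩
                rw [hbv, Sym2.eq_swap]
              · rw [Sym2.eq_iff] at h3
                rcases h3 with ⟨h3, -⟩ | ⟨h3, -⟩
                · exact absurd h3 (by simp)
                · exact absurd (Sum.inr.inj h3).symm huv₂
              · rw [Sym2.eq_iff] at h3
                rcases h3 with ⟨h3, -⟩ | ⟨-, rfl⟩
                · exact absurd h3 (by simp)
                · exact Or.inr rfl
            · rintro (⟨b, ⟨hadj, hbv⟩, rfl⟩ | rfl)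
              · refine (hΓ _ _).2 (Or.inr (Or.inl ⟨a, b, rfl, rfl, hadj, fun hs => ?_⟩))
                rw [Sym2.eq_iff] at hs
                rcases hs with ⟨rfl, -⟩ | ⟨-, rfl⟩
                · exact huv₂ rfl
                · exact hbv rfl
              · exact (hΓ _ _).2 (Or.inr (Or.inr (Or.inr (Sym2.eq_swap ..))))
          rw [hset, Set.ncard_union_eq (by simp), Set.ncard_image_of_injective _ Sum.inr_injective,
            Set.ncard_diff_singleton_of_mem ((Γ₂.mem_neighborSet _ _).2 he₂.symm), h₂reg,
            Set.ncard_singleton]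
          omega
        · have hset : Γ.neighborSet (Sum.inr a) = Sum.inr '' Γ₂.neighborSet a := by
            ext y
            simp only [mem_neighborSet, Set.mem_image]
            constructor
            · intro h
              rcases (hΓ _ _).1 h with ⟨a', b, ha', hb, hadj, hne⟩ | ⟨a', b, ha', hb, hadj, hne⟩
                | h3 | h3
              · exact absurd ha' (by simp)
              · obtain rfl : a = a' := Sum.inr.inj ha'
                exact ⟨b, hadj, hb.symm⟩
              · rw [Sym2.eq_iff] at h3
                rcases h3 with ⟨h3, -⟩ | ⟨h3, -⟩
                · exact absurd h3 (by simp)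
                · exact absurd (Sum.inr.inj h3) hau
              · rw [Sym2.eq_iff] at h3
                rcases h3 with ⟨h3, -⟩ | ⟨h3, -⟩
                · exact absurd h3 (by simp)
                · exact absurd (Sum.inr.inj h3) hav
            · rintro ⟨b, hadj, rfl⟩
              refine (hΓ _ _).2 (Or.inr (Or.inl ⟨a, b, rfl, rfl, hadj, fun hs => ?_⟩))
              rw [Sym2.eq_iff] at hs
              rcases hs with ⟨rfl, -⟩ | ⟨rfl, -⟩
              · exact hau rfl
              · exact hav rfl
          rw [hset, Set.ncard_image_of_injective _ Sum.inr_injective, h₂reg]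
  · -- girth
    have hee : s(Sum.inl u₁, Sum.inr u₂) ≠ (s(Sum.inl v₁, Sum.inr v₂) : Sym2 (V₁ ⊕ V₂)) := by
      simp [Sym2.eq_iff, huv₁]
    have hadjL : ∀ a b : V₁, Γ.Adj (Sum.inl a) (Sum.inl b) → Γ₁.Adj a b := by
      intro a b h
      rcases (hΓ _ _).1 h with ⟨a', b', ha', hb', hadj, -⟩ | ⟨a', b', ha', -, -, -⟩ | h3 | h3
      · obtain rfl : a = a' := Sum.inl.inj ha'
        obtain rfl : b = b' := Sum.inl.inj hb'
        exact hadj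
      · exact absurd ha' (by simp)
      · rw [Sym2.eq_iff] at h3
        rcases h3 with ⟨-, h'⟩ | ⟨h', -⟩ <;> exact absurd h' (by simp)
      · rw [Sym2.eq_iff] at h3
        rcases h3 with ⟨-, h'⟩ | ⟨h', -⟩ <;> exact absurd h' (by simp)
    have hadjR : ∀ a b : V₂, Γ.Adj (Sum.inr a) (Sum.inr b) → Γ₂.Adj a b := by
      intro a b h
      rcases (hΓ _ _).1 h with ⟨a', b', ha', -, -, -⟩ | ⟨a', b', ha', hb', hadj, -⟩ | h3 | h3
      · exact absurd ha' (by simp)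
      · obtain rfl : a = a' := Sum.inr.inj ha'
        obtain rfl : b = b' := Sum.inr.inj hb'
        exact hadj
      · rw [Sym2.eq_iff] at h3
        rcases h3 with ⟨h', -⟩ | ⟨-, h'⟩ <;> exact absurd h' (by simp)
      · rw [Sym2.eq_iff] at h3
        rcases h3 with ⟨h', -⟩ | ⟨-, h'⟩ <;> exact absurd h' (by simp)
    have hnadjL : ¬ Γ.Adj (Sum.inl u₁) (Sum.inl v₁) := by
      intro h
      rcases (hΓ _ _).1 h with ⟨a', b', ha', hb', -, hne⟩ | ⟨a', b', ha', -, -, -⟩ | h3 | h3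
      · obtain rfl : u₁ = a' := Sum.inl.inj ha'
        obtain rfl : v₁ = b' := Sum.inl.inj hb'
        exact hne rfl
      · exact absurd ha' (by simp)
      · rw [Sym2.eq_iff] at h3
        rcases h3 with ⟨-, h'⟩ | ⟨h', -⟩ <;> exact absurd h' (by simp)
      · rw [Sym2.eq_iff] at h3
        rcases h3 with ⟨-, h'⟩ | ⟨h', -⟩ <;> exact absurd h' (by simp)
    have hside : ∀ x y, Γ.Adj x y → s(x, y) ≠ s(Sum.inl u₁, Sum.inr u₂) →
        s(x, y) ≠ s(Sum.inl v₁, Sum.inr v₂) → x.isLeft = y.isLeft := by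
      intro x y h hn1 hn2
      rcases (hΓ _ _).1 h with ⟨a', b', rfl, rfl, -, -⟩ | ⟨a', b', rfl, rfl, -, -⟩ | h3 | h3
      · rfl
      · rfl
      · exact absurd h3 hn1
      · exact absurd h3 hn2
    have hcross : ∀ x y : V₁ ⊕ V₂, s(x, y) = s(Sum.inl u₁, Sum.inr u₂) ∨
        s(x, y) = s(Sum.inl v₁, Sum.inr v₂) → ¬ (x.isLeft = y.isLeft) := by
      intro x y h
      rcases h with h | h <;>
        (rw [Sym2.eq_iff] at h; rcases h with ⟨rfl, rfl⟩ | ⟨rfl, rfl⟩ <;> simp)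
    have parity : ∀ {x y : V₁ ⊕ V₂} (w : Γ.Walk x y), w.IsTrail →
        ((x.isLeft = y.isLeft) ↔
          (s(Sum.inl u₁, Sum.inr u₂) ∈ w.edges ↔ s(Sum.inl v₁, Sum.inr v₂) ∈ w.edges)) := by
      intro x y w
      induction w with
      | nil => simp
      | @cons x z y h p ih =>
        intro ht
        rw [Walk.isTrail_cons] at ht
        have ihp := ih ht.1
        simp only [Walk.edges_cons, List.mem_cons]
        by_cases hx1 : s(x, z) = s(Sum.inl u₁, Sum.inr u₂)
        · have hxz : ¬ (x.isLeft = z.isLeft) := hcross x z (Or.inl hx1)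
          have h1p : s(Sum.inl u₁, Sum.inr u₂) ∉ p.edges := hx1 ▸ ht.2
          rw [Stmt1Aux.bool_ne_iff hxz, ihp]
          simp [hx1, h1p, hee, hee.symm]
        · by_cases hx2 : s(x, z) = s(Sum.inl v₁, Sum.inr v₂)
          · have hxz : ¬ (x.isLeft = z.isLeft) := hcross x z (Or.inr hx2)
            have h2p : s(Sum.inl v₁, Sum.inr v₂) ∉ p.edges := hx2 ▸ ht.2
            rw [Stmt1Aux.bool_ne_iff hxz, ihp]
            simp [hx2, h2p, hee, hee.symm]
          · have hxz : x.isLeft = z.isLeft := hside x z h hx1 hx2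
            rw [hxz, ihp]
            simp [Ne.symm hx1, Ne.symm hx2]
    have sameside : ∀ {x y : V₁ ⊕ V₂} (w : Γ.Walk x y),
        s(Sum.inl u₁, Sum.inr u₂) ∉ w.edges → s(Sum.inl v₁, Sum.inr v₂) ∉ w.edges →
        ∀ v ∈ w.support, v.isLeft = x.isLeft := by
      intro x y w
      induction w with
      | nil =>
        intro _ _ v hv
        simp only [Walk.support_nil, List.mem_singleton] at hv
        rw [hv]
      | @cons x z y h p ih =>
        intro h1 h2 v hv
        simp only [Walk.edges_cons, List.mem_cons, not_or] at h1 h2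
        have hxz : x.isLeft = z.isLeft := hside x z h (Ne.symm h1.1) (Ne.symm h2.1)
        simp only [Walk.support_cons, List.mem_cons] at hv
        rcases hv with rfl | hv
        · rfl
        · rw [ih h1.2 h2.2 v hv, hxz]
    have key : ∀ (R : Γ.Walk (Sum.inl u₁) (Sum.inl v₁)), R.IsPath →
        s(Sum.inl u₁, Sum.inr u₂) ∉ R.edges → s(Sum.inl v₁, Sum.inr v₂) ∉ R.edges →
        g ≤ R.length + 1 := by
      intro R hR h1 h2
      have hleft : ∀ v ∈ R.support, ∃ c, v = Sum.inl c := by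
        intro v hv
        exact Sum.isLeft_iff.mp (by rw [sameside R h1 h2 v hv]; rfl)
      obtain ⟨R', hRl, hRs, hRe⟩ := Stmt1Aux.lift_walk Sum.inl_injective hadjL R hleft rfl rfl
      have hR'path : R'.IsPath := Stmt1Aux.isPath_of_lift hRs hR
      have hmem : s(v₁, u₁) ∉ R'.edges := by
        intro hmem
        have h' : s(Sum.inl v₁, Sum.inl u₁) ∈ R.edges := by
          rw [← hRe]
          have := List.mem_map_of_mem (f := Sym2.map (Sum.inl : V₁ → V₁ ⊕ V₂)) hmem
          rwa [Sym2.map_pair_eq] at this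
        exact hnadjL (R.adj_of_mem_edges h').symm
      have hcyc : (Walk.cons he₁.symm R').IsCycle :=
        (Walk.cons_isCycle_iff R' he₁.symm).2 ⟨hR'path, hmem⟩
      have hle := le_egirth.mp h₁g v₁ (Walk.cons he₁.symm R') hcyc
      rw [Walk.length_cons, hRl] at hle
      exact_mod_cast hle
    rw [le_egirth]
    intro b c hc
    suffices h : g ≤ c.length by exact_mod_cast h
    by_cases h1 : s(Sum.inl u₁, Sum.inr u₂) ∈ c.edges
    · have h2 : s(Sum.inl v₁, Sum.inr v₂) ∈ c.edges := ((parity c hc.isTrail).mp rfl).mp h1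
      have hu : Sum.inl u₁ ∈ c.support := c.fst_mem_support_of_mem_edges h1
      have hc₂ : (c.rotate _ hu).IsCycle := hc.rotate hu
      have hrot := c.rotate_edges _ hu
      have hlen₂ : (c.rotate _ hu).length = c.length := by
        have hl := hrot.perm.length_eq
        rwa [Walk.length_edges, Walk.length_edges] at hl
      have h1' : s(Sum.inl u₁, Sum.inr u₂) ∈ (c.rotate _ hu).edges := hrot.mem_iff.mpr h1
      have h2' : s(Sum.inl v₁, Sum.inr v₂) ∈ (c.rotate _ hu).edges := hrot.mem_iff.mpr h2
      have hv : Sum.inl v₁ ∈ (c.rotate _ hu).support :=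
        (c.rotate _ hu).fst_mem_support_of_mem_edges h2'
      obtain ⟨hTpath, hDpath⟩ := Stmt1Aux.cycle_decomp_paths hc₂ hv
        (fun h => huv₁ (Sum.inl.inj h).symm)
      have hspec := (c.rotate _ hu).take_spec hv
      have hlenTD : ((c.rotate _ hu).takeUntil _ hv).length + ((c.rotate _ hu).dropUntil _ hv).length
          = (c.rotate _ hu).length := by
        conv_rhs => rw [← hspec]
        rw [Walk.length_append]
      have hedges : (c.rotate _ hu).edges
          = ((c.rotate _ hu).takeUntil _ hv).edges ++ ((c.rotate _ hu).dropUntil _ hv).edges := by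
        conv_lhs => rw [← hspec]
        rw [Walk.edges_append]
      have hnodup := hc₂.isTrail.edges_nodup
      rw [hedges, List.nodup_append'] at hnodup
      rw [hedges] at h1' h2'
      have hTpar := (parity ((c.rotate _ hu).takeUntil _ hv) hTpath.isTrail).mp rfl
      by_cases hcase : s(Sum.inl u₁, Sum.inr u₂) ∈ ((c.rotate _ hu).takeUntil _ hv).edges
      · have h2T : s(Sum.inl v₁, Sum.inr v₂) ∈ ((c.rotate _ hu).takeUntil _ hv).edges :=
          hTpar.mp hcase
        have hd1 : s(Sum.inl u₁, Sum.inr u₂) ∉ ((c.rotate _ hu).dropUntil _ hv).edges :=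
          fun hm => hnodup.2.2 hcase hm
        have hd2 : s(Sum.inl v₁, Sum.inr v₂) ∉ ((c.rotate _ hu).dropUntil _ hv).edges :=
          fun hm => hnodup.2.2 h2T hm
        have hkey := key ((c.rotate _ hu).dropUntil _ hv).reverse hDpath.reverse
          (by simpa [Walk.edges_reverse] using hd1) (by simpa [Walk.edges_reverse] using hd2)
        have hTlen : 2 ≤ ((c.rotate _ hu).takeUntil _ hv).edges.length := by
          rcases hl : ((c.rotate _ hu).takeUntil _ hv).edges with _ | ⟨e, l⟩
          · rw [hl] at hcase; simp at hcase
          · rcases l with _ | ⟨e', l'⟩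
            · rw [hl] at hcase h2T
              simp only [List.mem_singleton] at hcase h2T
              exact absurd (hcase.trans h2T.symm) hee
            · simp
        rw [Walk.length_reverse] at hkey
        rw [Walk.length_edges] at hTlen
        omega
      · have he₁D : s(Sum.inl u₁, Sum.inr u₂) ∈ ((c.rotate _ hu).dropUntil _ hv).edges := by
          rcases List.mem_append.mp h1' with h | h
          · exact absurd h hcase
          · exact h
        have hDpar := (parity ((c.rotate _ hu).dropUntil _ hv) hDpath.isTrail).mp rfl
        have he₂D : s(Sum.inl v₁, Sum.inr v₂) ∈ ((c.rotate _ hu).dropUntil _ hv).edges :=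
          hDpar.mp he₁D
        have ht2 : s(Sum.inl v₁, Sum.inr v₂) ∉ ((c.rotate _ hu).takeUntil _ hv).edges :=
          fun hm => hcase (hTpar.mpr hm)
        have hkey := key ((c.rotate _ hu).takeUntil _ hv) hTpath hcase ht2
        have hDlen : 2 ≤ ((c.rotate _ hu).dropUntil _ hv).edges.length := by
          rcases hl : ((c.rotate _ hu).dropUntil _ hv).edges with _ | ⟨e, l⟩
          · rw [hl] at he₁D; simp at he₁D
          · rcases l with _ | ⟨e', l'⟩
            · rw [hl] at he₁D he₂D
              simp only [List.mem_singleton] at he₁D he₂D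
              exact absurd (he₁D.trans he₂D.symm) hee
            · simp
        rw [Walk.length_edges] at hDlen
        omega
    · have h2 : s(Sum.inl v₁, Sum.inr v₂) ∉ c.edges :=
        fun h2 => h1 (((parity c hc.isTrail).mp rfl).mpr h2)
      have hsame := sameside c h1 h2
      cases b with
      | inl a =>
        obtain ⟨c', hl, hs, he⟩ := Stmt1Aux.lift_walk Sum.inl_injective hadjL c
          (fun v hv => Sum.isLeft_iff.mp (by rw [hsame v hv]; rfl)) rfl rfl
        have hc' := Stmt1Aux.isCycle_of_lift hl hs he hc
        have hle := le_egirth.mp h₁g a c' hc'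
        rw [hl] at hle
        exact_mod_cast hle
      | inr a =>
        obtain ⟨c', hl, hs, he⟩ := Stmt1Aux.lift_walk Sum.inr_injective hadjR c
          (fun v hv => by
            have h := hsame v hv
            cases v with
            | inl b => simp at h
            | inr b => exact ⟨b, rfl⟩) rfl rfl
        have hc' := Stmt1Aux.isCycle_of_lift hl hs he hc
        have hle := le_egirth.mp h₂g a c' hc'
        rw [hl] at hle
        exact_mod_cast hle
end

section
/- For k ≥ 3 and g ≥ 3, every k-regular graph of girth g contains either an edge not lying on any cycle of length g, or at least two distinct cycles of length g. -/
open SimpleGraph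

lemma aux_path_edge {V : Type*} {G : SimpleGraph V} {v u x : V} (q : G.Walk v u)
    (hq : q.IsPath) (hx : s(v, x) ∈ q.edges) : x = q.getVert 1 := by
  cases q with
  | nil => simp at hx
  | cons h p =>
    rename_i b
    rw [SimpleGraph.Walk.edges_cons, List.mem_cons] at hx
    rcases hx with hx | hx
    · rw [Sym2.eq_iff] at hx
      rcases hx with ⟨_, rfl⟩ | ⟨rfl, rfl⟩
      · simp
      · exact absurd rfl h.ne
    · exact absurd (SimpleGraph.Walk.fst_mem_support_of_mem_edges p hx)
        (((SimpleGraph.Walk.cons_isPath_iff h p).mp hq).2)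

lemma aux_cycle_edge {V : Type*} {G : SimpleGraph V} {a : V} (c : G.Walk a a)
    (hc : c.IsCycle) : ∃ b y : V, ∀ x : V, s(a, x) ∈ c.edges → x = b ∨ x = y := by
  cases c with
  | nil => exact absurd rfl hc.ne_nil
  | cons h p =>
    rename_i b
    rw [SimpleGraph.Walk.cons_isCycle_iff] at hc
    refine ⟨b, p.reverse.getVert 1, fun x hx => ?_⟩
    rw [SimpleGraph.Walk.edges_cons, List.mem_cons] at hx
    rcases hx with hx | hx
    · left
      rw [Sym2.eq_iff] at hx
      rcases hx with ⟨_, rfl⟩ | ⟨rfl, rfl⟩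
      · rfl
      · exact absurd rfl h.ne
    · right
      exact aux_path_edge p.reverse hc.1.reverse (by rwa [SimpleGraph.Walk.edges_reverse,
        List.mem_reverse])

/-- For `k ≥ 3` and `g ≥ 3`, every `k`-regular graph of girth `g` contains either an edge not
lying on any cycle of length `g`, or at least two distinct cycles of length `g`. -/
theorem stmt_3 {V : Type*} (k g : ℕ) (hk : 3 ≤ k) (hg : 3 ≤ g)
    (G : SimpleGraph V) (hreg : ∀ v, (G.neighborSet v).ncard = k) (hgirth : G.egirth = g) :
    (∃ e ∈ G.edgeSet, ∀ (v : V) (c : G.Walk v v), c.IsCycle → c.length = g → e ∉ c.edges) ∨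
    (∃ (v w : V) (c₁ : G.Walk v v) (c₂ : G.Walk w w), c₁.IsCycle ∧ c₂.IsCycle ∧
      c₁.length = g ∧ c₂.length = g ∧ {e | e ∈ c₁.edges} ≠ {e | e ∈ c₂.edges}) := by
  by_cases hfirst : ∃ e ∈ G.edgeSet, ∀ (v : V) (c : G.Walk v v), c.IsCycle → c.length = g →
      e ∉ c.edges
  · exact Or.inl hfirst
  right
  -- G is not acyclic
  have hac : ¬ G.IsAcyclic := by
    rw [← SimpleGraph.egirth_eq_top.not, hgirth]
    intro h
    exact (ENat.coe_ne_top g) h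
  obtain ⟨a, c, hc, hclen⟩ := SimpleGraph.exists_egirth_eq_length.mpr hac
  rw [hgirth] at hclen
  have hclen' : c.length = g := by exact_mod_cast hclen.symm
  -- find an edge at a not on c
  obtain ⟨b, y, hby⟩ := aux_cycle_edge c hc
  have hfin : (G.neighborSet a).Finite := by
    by_contra hinf
    have h0 := hreg a
    rw [Set.Infinite.ncard hinf] at h0
    omega
  have : ¬ (G.neighborSet a ⊆ {b, y}) := by
    intro hsub
    have := Set.ncard_le_ncard hsub (Set.toFinite _)
    have h2 : ({b, y} : Set V).ncard ≤ 2 := by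
      apply (Set.ncard_insert_le _ _).trans
      simp
    rw [hreg a] at this
    omega
  obtain ⟨w, hw, hwby⟩ := Set.not_subset.mp this
  have hadj : G.Adj a w := hw
  have hnot : s(a, w) ∉ c.edges := by
    intro hmem
    rcases hby w hmem with rfl | rfl <;> simp at hwby
  push_neg at hfirst
  obtain ⟨v, c₂, hc₂, hc₂len, hmem⟩ := hfirst s(a, w) hadj
  exact ⟨a, v, c, c₂, hc, hc₂, hclen', hc₂len, fun heq => hnot (by
    have : s(a, w) ∈ {e | e ∈ c.edges} := by rw [heq]; exact hmem
    exact this)⟩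
end

section
/- Let k ≥ 3 and g ≥ 3 and let S(k,g) ⊆ ℕ denote the set of orders of connected k-regular graphs of girth exactly g. Then S(k,g) is closed under addition: if n₁, n₂ ∈ S(k,g), then n₁+n₂ ∈ S(k,g). -/
open SimpleGraph

namespace KGAux

variable {V : Type*}

lemma egirth_le_length {G : SimpleGraph V} {a : V} {c : G.Walk a a} (hc : c.IsCycle) :
    G.egirth ≤ c.length := by
  rw [egirth]
  exact iInf_le_of_le a (iInf_le_of_le c (iInf_le_of_le hc le_rfl))

/-- Min-degree-two within a closed set gives a cycle with support in that set. -/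
lemma exists_cycle_of_min_degree_two [Fintype V] {G : SimpleGraph V} {S : Set V}
    (hne : S.Nonempty)
    (hdeg : ∀ x ∈ S, 2 ≤ ((G.neighborSet x) ∩ S).ncard) :
    ∃ (a : V) (c : G.Walk a a), c.IsCycle ∧ ∀ z ∈ c.support, z ∈ S := by
  classical
  obtain ⟨w, hw⟩ := hne
  set PS : Set ℕ :=
    {n | ∃ (a : V) (b : V) (p : G.Walk a b), p.IsPath ∧ (∀ z ∈ p.support, z ∈ S) ∧
      p.length = n} with hPS
  have hne' : PS.Nonempty := ⟨0, w, w, Walk.nil, by simp, by simpa using hw, rfl⟩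
  have hbdd : BddAbove PS := by
    refine ⟨Fintype.card V, ?_⟩
    rintro n ⟨a, b, p, hp, -, rfl⟩
    exact (hp.length_lt).le
  obtain ⟨a, b, p, hp, hsupp, hlen⟩ := Nat.sSup_mem hne' hbdd
  have ha : a ∈ S := hsupp a p.start_mem_support
  -- every "good" continuation from `a` must stay on `p`
  have hext : ∀ z, G.Adj a z → z ∈ S → z ∈ p.support := by
    intro z hz hzS
    by_contra hzp
    have : (Walk.cons hz.symm p).length ∈ PS := by
      refine ⟨z, b, Walk.cons hz.symm p, ?_, ?_, rfl⟩
      · rw [Walk.cons_isPath_iff]; exact ⟨hp, hzp⟩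
      · intro y hy
        rcases (by simpa using hy : y = z ∨ y ∈ p.support) with rfl | hy
        · exact hzS
        · exact hsupp _ hy
    have := le_csSup hbdd this
    simp only [Walk.length_cons, hlen] at this
    omega
  cases p with
  | nil =>
    exfalso
    obtain ⟨z, hz⟩ : ((G.neighborSet a) ∩ S).Nonempty := by
      have := hdeg a ha
      exact Set.nonempty_of_ncard_ne_zero (by omega)
    have hz1 : G.Adj a z := hz.1
    have := hext z hz1 hz.2
    simp only [Walk.support_nil, List.mem_singleton] at this
    exact hz1.ne (this ▸ rfl)
  | @cons a c b hac p' =>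
    obtain ⟨z₁, z₂, hz₁, hz₂, hz12⟩ :
        ∃ z₁ z₂, z₁ ∈ (G.neighborSet a) ∩ S ∧ z₂ ∈ (G.neighborSet a) ∩ S ∧ z₁ ≠ z₂ := by
      have := hdeg a ha
      exact (Set.one_lt_ncard_iff (Set.toFinite _)).mp (by omega)
    obtain ⟨z, hzNS, hzc⟩ : ∃ z, z ∈ (G.neighborSet a) ∩ S ∧ z ≠ c := by
      rcases eq_or_ne z₁ c with rfl | h
      · exact ⟨z₂, hz₂, fun h => hz12 h.symm⟩
      · exact ⟨z₁, hz₁, h⟩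
    have hza : G.Adj a z := hzNS.1
    have hzsupp : z ∈ (Walk.cons hac p').support := hext z hza hzNS.2
    have hzae : z ≠ a := fun h => hza.ne h.symm
    -- the edge s(a,z) is not an edge of p
    have hedge : s(a, z) ∉ (Walk.cons hac p').edges := by
      intro hmem
      rw [Walk.edges_cons] at hmem
      rcases List.mem_cons.mp hmem with h | h
      · rw [Sym2.eq_iff] at h
        rcases h with ⟨-, h⟩ | ⟨-, h⟩
        · exact hzc h
        · exact hzae h
      · have : a ∈ p'.support := Walk.fst_mem_support_of_mem_edges p' h
        rw [Walk.cons_isPath_iff] at hp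
        exact hp.2 this
    set q := (Walk.cons hac p').takeUntil z hzsupp with hq
    refine ⟨z, Walk.cons hza.symm q, ?_, ?_⟩
    · rw [Walk.cons_isCycle_iff]
      constructor
      · exact hp.takeUntil _
      · rw [Sym2.eq_swap]
        exact fun h => hedge (Walk.edges_takeUntil_subset _ _ h)
    · intro y hy
      rcases (by simpa using hy : y = z ∨ y ∈ q.support) with rfl | hy
      · exact hzNS.2
      · exact hsupp _ (Walk.support_takeUntil_subset _ _ hy)



lemma degree_eq_ncard [Fintype V] (G : SimpleGraph V) [DecidableRel G.Adj] (v : V) :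
    G.degree v = (G.neighborSet v).ncard := by
  rw [← card_neighborFinset_eq_degree, neighborFinset_def, Set.ncard_eq_toFinset_card']

lemma reachable_deleteEdges {G : SimpleGraph V} {u v : V}
    (hr : (G.deleteEdges {s(u, v)}).Reachable u v) {x y : V} (h : G.Reachable x y) :
    (G.deleteEdges {s(u, v)}).Reachable x y := by
  obtain ⟨w⟩ := h
  induction w with
  | nil => exact Reachable.refl _
  | @cons a b c hab w ih =>
    refine Reachable.trans ?_ ih
    by_cases he : s(a, b) = s(u, v)
    · rw [Sym2.eq_iff] at he
      rcases he with ⟨rfl, rfl⟩ | ⟨rfl, rfl⟩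
      · exact hr
      · exact hr.symm
    · exact Adj.reachable (by rw [deleteEdges_adj]; exact ⟨hab, by simpa using he⟩)

lemma connected_deleteEdges {G : SimpleGraph V} {u v : V} (hc : G.Connected)
    (hr : (G.deleteEdges {s(u, v)}).Reachable u v) :
    (G.deleteEdges {s(u, v)}).Connected := by
  have : Nonempty V := hc.nonempty
  exact ⟨fun x y => reachable_deleteEdges hr (hc.preconnected x y)⟩

/-- In a graph with min degree three, deleting a bridge leaves a cycle in
the component of `q`. -/
lemma exists_cycle_in_component [Fintype V] {G : SimpleGraph V} {p q : V}
    {s : Set (Sym2 V)} (hs : s = {s(p, q)}) (hpq : G.Adj p q)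
    (hb : ¬(G.deleteEdges s).Reachable p q)
    (hdeg : ∀ x, 3 ≤ (G.neighborSet x).ncard) :
    ∃ (a : V) (c : (G.deleteEdges s).Walk a a), c.IsCycle ∧
      ∀ z ∈ c.support, (G.deleteEdges s).Reachable q z := by
  classical
  set G' := G.deleteEdges s with hG'
  have hsub : ∀ x, G'.neighborSet x ⊆ {z | G'.Reachable q z} → True := fun _ _ => trivial
  have key : ∀ x ∈ {z | G'.Reachable q z},
      2 ≤ ((G'.neighborSet x) ∩ {z | G'.Reachable q z}).ncard := by
    intro x hx
    have hxp : x ≠ p := by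
      rintro rfl
      exact hb (Reachable.symm hx)
    have hNsub : (G'.neighborSet x) ∩ {z | G'.Reachable q z} = G'.neighborSet x := by
      apply Set.inter_eq_self_of_subset_left
      intro y hy
      exact Reachable.trans hx (Adj.reachable hy)
    rw [hNsub]
    by_cases hxq : x = q
    · subst hxq
      have : G.neighborSet x \ {p} ⊆ G'.neighborSet x := by
        intro y hy
        rw [mem_neighborSet, hG', deleteEdges_adj, hs]
        refine ⟨hy.1, ?_⟩
        simp only [Set.mem_singleton_iff, Sym2.eq_iff]
        rintro (⟨h1, -⟩ | ⟨-, h2⟩)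
        · exact hpq.ne h1.symm
        · exact hy.2 h2
      have h1 : 2 ≤ (G.neighborSet x \ {p}).ncard := by
        have := Set.ncard_diff_singleton_add_one (s := G.neighborSet x) (a := p)
        have h3 := hdeg x
        by_cases hp : p ∈ G.neighborSet x
        · have := Set.ncard_diff_singleton_add_one hp (Set.toFinite _)
          omega
        · rw [Set.diff_singleton_eq_self hp]
          omega
      calc 2 ≤ (G.neighborSet x \ {p}).ncard := h1
        _ ≤ (G'.neighborSet x).ncard := Set.ncard_le_ncard this (Set.toFinite _)
    · have : G.neighborSet x ⊆ G'.neighborSet x := by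
        intro y hy
        rw [mem_neighborSet, hG', deleteEdges_adj, hs]
        refine ⟨hy, ?_⟩
        simp only [Set.mem_singleton_iff, Sym2.eq_iff]
        rintro (⟨h1, -⟩ | ⟨h1, -⟩)
        · exact hxp h1
        · exact hxq h1
      calc 2 ≤ (G.neighborSet x).ncard := by have := hdeg x; omega
        _ ≤ (G'.neighborSet x).ncard := Set.ncard_le_ncard this (Set.toFinite _)
  obtain ⟨a, c, hc, hcs⟩ := exists_cycle_of_min_degree_two (G := G')
    (S := {z | G'.Reachable q z}) ⟨q, Reachable.refl _⟩ key
  exact ⟨a, c, hc, hcs⟩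


lemma exists_edge_notin_cycle [Fintype V] {G : SimpleGraph V} {g : ℕ} (hg : 3 ≤ g)
    (hdeg : ∀ x, 3 ≤ (G.neighborSet x).ncard)
    {a₀ : V} {c : G.Walk a₀ a₀} (hc : c.IsCycle) (hlen : c.length = g) :
    ∃ x y, G.Adj x y ∧ s(x, y) ∉ c.edges := by
  classical
  by_contra hcon
  push_neg at hcon
  have hE : G.edgeFinset ⊆ c.edges.toFinset := by
    intro e he
    induction e with
    | h x y =>
      exact List.mem_toFinset.2 (hcon x y (by rwa [mem_edgeFinset, mem_edgeSet] at he))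
  have h1 : G.edgeFinset.card ≤ g := by
    calc G.edgeFinset.card ≤ c.edges.toFinset.card := Finset.card_le_card hE
      _ ≤ c.edges.length := c.edges.toFinset_card_le
      _ = g := by rw [c.length_edges, hlen]
  have h2 : g ≤ Fintype.card V := by
    have hnd : c.support.tail.Nodup := hc.support_nodup
    have h4 := c.length_support
    have h5 : c.support.tail.length = c.support.length - 1 := by
      simp [List.length_tail]
    have h6 : c.support.tail.length = g := by omega
    calc g = c.support.tail.length := h6.symm
      _ ≤ Fintype.card V := hnd.length_le_card
  have h3 : 3 * Fintype.card V ≤ ∑ v, G.degree v := by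
    calc 3 * Fintype.card V = ∑ _v : V, 3 := by
          rw [Finset.sum_const, Finset.card_univ, smul_eq_mul, mul_comm]
      _ ≤ ∑ v, G.degree v := by
          apply Finset.sum_le_sum
          intro v _
          rw [degree_eq_ncard]
          exact hdeg v
  rw [G.sum_degrees_eq_twice_card_edges] at h3
  omega

lemma exists_good_edge [Fintype V] {G : SimpleGraph V} {g : ℕ} (hg : 3 ≤ g)
    (hconn : G.Connected) (hdeg : ∀ x, 3 ≤ (G.neighborSet x).ncard)
    (hgirth : G.egirth = (g : ℕ∞)) :
    ∃ u v, G.Adj u v ∧ (G.deleteEdges {s(u, v)}).Connected ∧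
      ∃ (a : V) (c : (G.deleteEdges {s(u, v)}).Walk a a), c.IsCycle ∧ c.length = g := by
  classical
  have hnac : ¬G.IsAcyclic := by
    rw [← egirth_eq_top, hgirth]
    simp
  obtain ⟨a₀, c₀, hc₀, hlen₀⟩ := exists_egirth_eq_length.2 hnac
  rw [hgirth] at hlen₀
  have hlen₀' : c₀.length = g := by exact_mod_cast hlen₀.symm
  -- key claim: there is an adjacent pair whose edge is off `c₀` and is not a bridge
  have claim : ∃ x y, G.Adj x y ∧ s(x, y) ∉ c₀.edges ∧
      (G.deleteEdges {s(x, y)}).Reachable x y := by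
    by_contra hcon
    push_neg at hcon
    obtain ⟨p, q, hpq, hpqc⟩ := exists_edge_notin_cycle hg hdeg hc₀ hlen₀'
    have hb : ¬(G.deleteEdges {s(p, q)}).Reachable p q := hcon p q hpq hpqc
    -- transfer c₀ into G - s(p,q)
    have hc₀e : ∀ e ∈ c₀.edges, e ∈ (G.deleteEdges {s(p, q)}).edgeSet := by
      intro e he
      rw [edgeSet_deleteEdges]
      refine ⟨c₀.edges_subset_edgeSet he, ?_⟩
      simp only [Set.mem_singleton_iff]
      rintro rfl
      exact hpqc he
    set c₀' := c₀.transfer (G.deleteEdges {s(p, q)}) hc₀e with hc₀'def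
    have hreachC : ∀ z ∈ c₀.support, (G.deleteEdges {s(p, q)}).Reachable a₀ z := by
      intro z hz
      have hz' : z ∈ c₀'.support := by rwa [Walk.support_transfer]
      exact ⟨c₀'.takeUntil z hz'⟩
    -- pick the cycle in the component not containing a₀
    have main : ∃ (a : V) (c' : (G.deleteEdges {s(p, q)}).Walk a a), c'.IsCycle ∧
        ∀ z ∈ c'.support, z ∉ c₀.support := by
      by_cases hqa : (G.deleteEdges {s(p, q)}).Reachable q a₀
      · obtain ⟨a, c', hc', hcr⟩ := exists_cycle_in_component
          (s := {s(p, q)}) (by rw [Sym2.eq_swap]) hpq.symm (fun h => hb h.symm) hdeg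
        refine ⟨a, c', hc', fun z hz hzc => ?_⟩
        have h1 : (G.deleteEdges {s(p, q)}).Reachable p z := hcr z hz
        have h2 : (G.deleteEdges {s(p, q)}).Reachable a₀ z := hreachC z hzc
        exact hb (h1.trans (hqa.trans h2).symm)
      · obtain ⟨a, c', hc', hcr⟩ := exists_cycle_in_component
          (s := {s(p, q)}) rfl hpq hb hdeg
        refine ⟨a, c', hc', fun z hz hzc => ?_⟩
        have h1 : (G.deleteEdges {s(p, q)}).Reachable q z := hcr z hz
        have h2 : (G.deleteEdges {s(p, q)}).Reachable a₀ z := hreachC z hzc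
        exact hqa (h1.trans h2.symm)
    obtain ⟨a, c', hc', hdisj⟩ := main
    -- take an edge of c'
    have hne : c'.edges ≠ [] := by
      have := hc'.three_le_length
      intro h
      rw [← c'.length_edges, h] at this
      simp at this
    obtain ⟨e, he⟩ := List.exists_mem_of_ne_nil _ hne
    induction e with
    | h x y =>
      have hadj' : (G.deleteEdges {s(p, q)}).Adj x y := c'.adj_of_mem_edges he
      have hadj : G.Adj x y := ((deleteEdges_adj).1 hadj').1
      have hxC : x ∉ c₀.support := hdisj x (c'.fst_mem_support_of_mem_edges he)
      have hxy_notin : s(x, y) ∉ c₀.edges := fun h =>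
        hxC (c₀.fst_mem_support_of_mem_edges h)
      -- x and y are reachable in G - s(x,y), via the cycle c'
      have hreach : (G.deleteEdges {s(x, y)}).Reachable x y := by
        have := (adj_and_reachable_delete_edges_iff_exists_cycle
          (G := G.deleteEdges {s(p, q)}) (v := x) (w := y)).2 ⟨a, c', hc', he⟩
        refine Reachable.map (Hom.ofLE ?_) this.2
        have hle : G.deleteEdges {s(p, q)} ≤ G := deleteEdges_le _
        calc G.deleteEdges {s(p, q)} \ fromEdgeSet {s(x, y)}
            ≤ G \ fromEdgeSet {s(x, y)} := sdiff_le_sdiff_right hle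
          _ = G.deleteEdges {s(x, y)} := rfl
      exact hcon x y hadj hxy_notin hreach
  obtain ⟨u, v, huv, hnc, hr⟩ := claim
  refine ⟨u, v, huv, connected_deleteEdges hconn hr, ?_⟩
  have hce : ∀ e ∈ c₀.edges, e ∈ (G.deleteEdges {s(u, v)}).edgeSet := by
    intro e he
    rw [edgeSet_deleteEdges]
    refine ⟨c₀.edges_subset_edgeSet he, ?_⟩
    simp only [Set.mem_singleton_iff]
    rintro rfl
    exact hnc he
  exact ⟨a₀, c₀.transfer _ hce, hc₀.transfer hce, by rw [Walk.length_transfer, hlen₀']⟩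

variable {V₁ V₂ : Type*}

/-- The junction graph: delete edge `u₁v₁` from `G₁` and `u₂v₂` from `G₂` and add
the cross edges `u₁u₂`, `v₁v₂`. -/
def JG (G₁ : SimpleGraph V₁) (G₂ : SimpleGraph V₂) (u₁ v₁ : V₁) (u₂ v₂ : V₂) :
    SimpleGraph (V₁ ⊕ V₂) where
  Adj x y :=
    match x, y with
    | .inl a, .inl b => G₁.Adj a b ∧ s(a, b) ≠ s(u₁, v₁)
    | .inr a, .inr b => G₂.Adj a b ∧ s(a, b) ≠ s(u₂, v₂)
    | .inl a, .inr b => (a = u₁ ∧ b = u₂) ∨ (a = v₁ ∧ b = v₂)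
    | .inr a, .inl b => (b = u₁ ∧ a = u₂) ∨ (b = v₁ ∧ a = v₂)
  symm := by
    constructor
    rintro (a | a) (b | b) h
    · exact ⟨h.1.symm, by rw [Sym2.eq_swap]; exact h.2⟩
    · tauto
    · tauto
    · exact ⟨h.1.symm, by rw [Sym2.eq_swap]; exact h.2⟩
  loopless := by
    constructor
    rintro (a | a) h
    · exact G₁.loopless.irrefl a h.1
    · exact G₂.loopless.irrefl a h.1

variable {G₁ : SimpleGraph V₁} {G₂ : SimpleGraph V₂} {u₁ v₁ : V₁} {u₂ v₂ : V₂}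

@[simp] lemma JG_adj_ll {a b : V₁} :
    (JG G₁ G₂ u₁ v₁ u₂ v₂).Adj (.inl a) (.inl b) ↔ G₁.Adj a b ∧ s(a, b) ≠ s(u₁, v₁) :=
  Iff.rfl

@[simp] lemma JG_adj_rr {a b : V₂} :
    (JG G₁ G₂ u₁ v₁ u₂ v₂).Adj (.inr a) (.inr b) ↔ G₂.Adj a b ∧ s(a, b) ≠ s(u₂, v₂) :=
  Iff.rfl

@[simp] lemma JG_adj_lr {a : V₁} {b : V₂} :
    (JG G₁ G₂ u₁ v₁ u₂ v₂).Adj (.inl a) (.inr b) ↔ (a = u₁ ∧ b = u₂) ∨ (a = v₁ ∧ b = v₂) :=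
  Iff.rfl

@[simp] lemma JG_adj_rl {a : V₂} {b : V₁} :
    (JG G₁ G₂ u₁ v₁ u₂ v₂).Adj (.inr a) (.inl b) ↔ (b = u₁ ∧ a = u₂) ∨ (b = v₁ ∧ a = v₂) :=
  Iff.rfl

lemma JG_swap : JG G₁ G₂ v₁ u₁ v₂ u₂ = JG G₁ G₂ u₁ v₁ u₂ v₂ := by
  have h1 : s(v₁, u₁) = s(u₁, v₁) := Sym2.eq_swap
  have h2 : s(v₂, u₂) = s(u₂, v₂) := Sym2.eq_swap
  ext x y
  rcases x with a | a <;> rcases y with b | b <;>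
    simp only [JG_adj_ll, JG_adj_rr, JG_adj_lr, JG_adj_rl, h1, h2] <;> tauto

/-- Embedding of `G₁ - u₁v₁` into the junction graph. -/
def ι₁ : G₁.deleteEdges {s(u₁, v₁)} →g JG G₁ G₂ u₁ v₁ u₂ v₂ where
  toFun := Sum.inl
  map_rel' := by
    intro a b h
    rw [deleteEdges_adj] at h
    exact JG_adj_ll.2 ⟨h.1, by simpa using h.2⟩

/-- Embedding of `G₂ - u₂v₂` into the junction graph. -/
def ι₂ : G₂.deleteEdges {s(u₂, v₂)} →g JG G₁ G₂ u₁ v₁ u₂ v₂ where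
  toFun := Sum.inr
  map_rel' := by
    intro a b h
    rw [deleteEdges_adj] at h
    exact JG_adj_rr.2 ⟨h.1, by simpa using h.2⟩

lemma pull_r : ∀ {x y : V₁ ⊕ V₂} (w : (JG G₁ G₂ u₁ v₁ u₂ v₂).Walk x y)
    (_ : ∀ z ∈ w.support, z.isRight) {a b : V₂} (hx : x = .inr a) (hy : y = .inr b),
    ∃ p : (G₂.deleteEdges {s(u₂, v₂)}).Walk a b, p.map ι₂ = w.copy hx hy := by
  intro x y w
  induction w with
  | nil =>
    intro _ a b hx hy
    subst hx
    obtain rfl : a = b := Sum.inr.inj hy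
    exact ⟨.nil, by simp [Walk.copy_nil]; rfl⟩
  | @cons x x' y h w ih =>
    intro hs a b hx hy
    subst hx
    obtain ⟨c, rfl⟩ : ∃ c, x' = Sum.inr c := by
      have := hs x' (by simp [Walk.support_cons])
      cases x' with
      | inl _ => simp at this
      | inr c => exact ⟨c, rfl⟩
    have hadj : (G₂.deleteEdges {s(u₂, v₂)}).Adj a c := by
      rw [deleteEdges_adj]
      have := JG_adj_rr.1 h
      exact ⟨this.1, by simpa using this.2⟩
    obtain ⟨p, hp⟩ := ih (fun z hz => hs z (by simp [Walk.support_cons]; tauto)) rfl hy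
    refine ⟨.cons hadj p, ?_⟩
    rw [Walk.map_cons, hp, Walk.copy_cons]
    rfl

lemma pull_l : ∀ {x y : V₁ ⊕ V₂} (w : (JG G₁ G₂ u₁ v₁ u₂ v₂).Walk x y)
    (_ : ∀ z ∈ w.support, z.isLeft) {a b : V₁} (hx : x = .inl a) (hy : y = .inl b),
    ∃ p : (G₁.deleteEdges {s(u₁, v₁)}).Walk a b, p.map ι₁ = w.copy hx hy := by
  intro x y w
  induction w with
  | nil =>
    intro _ a b hx hy
    subst hx
    obtain rfl : a = b := Sum.inl.inj hy
    exact ⟨.nil, by simp [Walk.copy_nil]; rfl⟩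
  | @cons x x' y h w ih =>
    intro hs a b hx hy
    subst hx
    obtain ⟨c, rfl⟩ : ∃ c, x' = Sum.inl c := by
      have := hs x' (by simp [Walk.support_cons])
      cases x' with
      | inl c => exact ⟨c, rfl⟩
      | inr _ => simp at this
    have hadj : (G₁.deleteEdges {s(u₁, v₁)}).Adj a c := by
      rw [deleteEdges_adj]
      have := JG_adj_ll.1 h
      exact ⟨this.1, by simpa using this.2⟩
    obtain ⟨p, hp⟩ := ih (fun z hz => hs z (by simp [Walk.support_cons]; tauto)) rfl hy
    refine ⟨.cons hadj p, ?_⟩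
    rw [Walk.map_cons, hp, Walk.copy_cons]
    rfl

lemma path_first_edge {V : Type*} {G : SimpleGraph V} :
    ∀ {x y z : V} (p : G.Walk x y), p.IsPath → s(x, z) ∈ p.edges →
      ∃ (h : G.Adj x z) (q : G.Walk z y), p = Walk.cons h q := by
  intro x y z p hp he
  cases p with
  | nil => simp at he
  | @cons x x'' y h q =>
    rw [Walk.edges_cons, List.mem_cons] at he
    rcases he with he | he
    · obtain rfl : z = x'' := Sym2.congr_right.mp he
      exact ⟨h, q, rfl⟩
    · exfalso
      rw [Walk.cons_isPath_iff] at hp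
      exact hp.2 (q.fst_mem_support_of_mem_edges he)

lemma no_cross_same_side :
    ∀ {x y : V₁ ⊕ V₂} (w : (JG G₁ G₂ u₁ v₁ u₂ v₂).Walk x y),
      s(Sum.inl u₁, Sum.inr u₂) ∉ w.edges → s(Sum.inl v₁, Sum.inr v₂) ∉ w.edges →
      ∀ z ∈ w.support, z.isRight = x.isRight := by
  intro x y w
  induction w with
  | nil => intro _ _ z hz; simp at hz; subst hz; rfl
  | @cons x x' y h w ih =>
    intro hu hv z hz
    rw [Walk.edges_cons, List.mem_cons] at hu hv
    push_neg at hu hv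
    have hx' : x'.isRight = x.isRight := by
      rcases x with a | a <;> rcases x' with b | b
      · rfl
      · exfalso
        rcases JG_adj_lr.1 h with ⟨rfl, rfl⟩ | ⟨rfl, rfl⟩
        · exact hu.1 rfl
        · exact hv.1 rfl
      · exfalso
        rcases JG_adj_rl.1 h with ⟨rfl, rfl⟩ | ⟨rfl, rfl⟩
        · exact hu.1 (Sym2.eq_swap)
        · exact hv.1 (Sym2.eq_swap)
      · rfl
    rw [Walk.support_cons, List.mem_cons] at hz
    rcases hz with rfl | hz
    · rfl
    · rw [ih hu.2 hv.2 z hz, hx']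

lemma cross_walk (h₂ : G₂.Adj u₂ v₂) :
    ∀ {x y : V₁ ⊕ V₂} (w : (JG G₁ G₂ u₁ v₁ u₂ v₂).Walk x y) {a : V₂},
      x = Sum.inr a → y.isLeft → s(Sum.inl u₁, Sum.inr u₂) ∉ w.edges →
      ∃ t : (G₂.deleteEdges {s(u₂, v₂)}).Walk a v₂, t.length + 1 ≤ w.length := by
  intro x y w
  induction w with
  | nil =>
    intro a hx hy _
    subst hx
    simp at hy
  | @cons x x' y h w ih =>
    intro a hx hy hcru
    subst hx
    rw [Walk.edges_cons, List.mem_cons] at hcru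
    push_neg at hcru
    rcases x' with b | c
    · -- crossing step
      rcases JG_adj_rl.1 h with ⟨rfl, rfl⟩ | ⟨rfl, rfl⟩
      · exact absurd Sym2.eq_swap hcru.1
      · exact ⟨Walk.nil, by simp [Walk.length_cons]⟩
    · -- step within the right side
      have hadj : (G₂.deleteEdges {s(u₂, v₂)}).Adj a c := by
        rw [deleteEdges_adj]
        have := JG_adj_rr.1 h
        exact ⟨this.1, by simpa using this.2⟩
      obtain ⟨t, ht⟩ := ih rfl hy hcru.2
      exact ⟨Walk.cons hadj t, by rw [Walk.length_cons, Walk.length_cons]; omega⟩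

lemma dist_bound {g : ℕ} (h₂ : G₂.Adj u₂ v₂) (hg2 : G₂.egirth = (g : ℕ∞))
    (w : (G₂.deleteEdges {s(u₂, v₂)}).Walk u₂ v₂) : g ≤ w.length + 1 := by
  classical
  set p := w.bypass with hpdef
  have hp : p.IsPath := w.bypass_isPath
  have hlen : p.length ≤ w.length := w.length_bypass_le
  have hE : ∀ e ∈ p.edges, e ∈ G₂.edgeSet := by
    intro e he
    have := p.edges_subset_edgeSet he
    rw [edgeSet_deleteEdges] at this
    exact this.1
  have hc : (Walk.cons h₂.symm (p.transfer G₂ hE)).IsCycle := by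
    rw [Walk.cons_isCycle_iff]
    refine ⟨hp.transfer _, ?_⟩
    rw [Walk.edges_transfer]
    intro hmem
    have h5 := p.edges_subset_edgeSet hmem
    rw [edgeSet_deleteEdges] at h5
    exact h5.2 (by rw [Sym2.eq_swap]; rfl)
  have h6 := egirth_le_length hc
  rw [hg2] at h6
  have h7 : (Walk.cons h₂.symm (p.transfer G₂ hE)).length = p.length + 1 := by
    rw [Walk.length_cons, Walk.length_transfer]
  rw [h7] at h6
  have h8 : g ≤ p.length + 1 := by exact_mod_cast h6
  omega

lemma lower_u {g : ℕ} (h₂ : G₂.Adj u₂ v₂) (hg2 : G₂.egirth = (g : ℕ∞))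
    {x : V₁ ⊕ V₂} {c : (JG G₁ G₂ u₁ v₁ u₂ v₂).Walk x x} (hc : c.IsCycle)
    (hcr : s(Sum.inl u₁, Sum.inr u₂) ∈ c.edges) : g ≤ c.length := by
  classical
  have hm : (Sum.inr u₂ : V₁ ⊕ V₂) ∈ c.support := c.snd_mem_support_of_mem_edges hcr
  obtain ⟨c₂, hC, hce, hlenr⟩ : ∃ c₂ : (JG G₁ G₂ u₁ v₁ u₂ v₂).Walk (.inr u₂) (.inr u₂),
      c₂.IsCycle ∧ s(Sum.inl u₁, Sum.inr u₂) ∈ c₂.edges ∧ c₂.length = c.length := by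
    refine ⟨c.rotate _ hm, hc.rotate hm, (c.rotate_edges _ hm).mem_iff.2 hcr, ?_⟩
    have := (c.rotate_darts _ hm).perm.length_eq
    simpa [Walk.length_darts] using this
  cases c₂ with
  | nil => simpa using hC.three_le_length
  | @cons _ x' _ h q =>
    rw [Walk.cons_isCycle_iff] at hC
    obtain ⟨hqpath, hne⟩ := hC
    rw [Walk.edges_cons, List.mem_cons] at hce
    rw [Walk.length_cons] at hlenr
    rcases hce with hce | hce
    · -- the first edge of the cycle is the cross edge
      have hx' : x' = Sum.inl u₁ := by
        rw [Sym2.eq_iff] at hce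
        rcases hce with ⟨h1, -⟩ | ⟨h2, -⟩
        · exact absurd h1 (by simp)
        · exact h2.symm
      subst hx'
      obtain ⟨t, ht⟩ := cross_walk h₂ q.reverse rfl (by simp) (by
        rw [Walk.edges_reverse, List.mem_reverse]
        intro hmem
        exact hne (by rwa [Sym2.eq_swap] at hmem))
      have h9 := dist_bound h₂ hg2 t
      rw [Walk.length_reverse] at ht
      omega
    · -- the cross edge lies inside `q`
      obtain ⟨cc, rfl⟩ : ∃ cc, x' = Sum.inr cc := by
        rcases x' with b | cc
        · exfalso
          rcases JG_adj_rl.1 h with ⟨rfl, -⟩ | ⟨rfl, h4⟩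
          · exact hne (by rw [Sym2.eq_swap]; exact hce)
          · exact h₂.ne h4
        · exact ⟨cc, rfl⟩
      have hadj : (G₂.deleteEdges {s(u₂, v₂)}).Adj u₂ cc := by
        rw [deleteEdges_adj]
        have := JG_adj_rr.1 h
        exact ⟨this.1, by simpa using this.2⟩
      have hqr : s(Sum.inr u₂, Sum.inl u₁) ∈ q.reverse.edges := by
        rw [Walk.edges_reverse, List.mem_reverse]
        rw [Sym2.eq_swap]
        exact hce
      obtain ⟨h', q₀, hq₀⟩ := path_first_edge q.reverse hqpath.reverse hqr
      have hnodup : q.reverse.edges.Nodup := hqpath.reverse.isTrail.edges_nodup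
      rw [hq₀, Walk.edges_cons] at hnodup
      have hq₀cr : s(Sum.inl u₁, Sum.inr u₂) ∉ q₀.edges := by
        intro hmem
        exact (List.nodup_cons.1 hnodup).1 (by rw [Sym2.eq_swap]; exact hmem)
      obtain ⟨t, ht⟩ := cross_walk h₂ q₀.reverse rfl (by simp) (by
        rw [Walk.edges_reverse, List.mem_reverse]
        exact hq₀cr)
      have h9 := dist_bound h₂ hg2 (Walk.cons hadj t)
      rw [Walk.length_cons] at h9
      rw [Walk.length_reverse] at ht
      have h10 : q.length = q₀.length + 1 := by
        have := congrArg Walk.length hq₀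
        rw [Walk.length_reverse, Walk.length_cons] at this
        exact this
      omega

lemma lower_v {g : ℕ} (h₂ : G₂.Adj u₂ v₂) (hg2 : G₂.egirth = (g : ℕ∞))
    {x : V₁ ⊕ V₂} {c : (JG G₁ G₂ u₁ v₁ u₂ v₂).Walk x x} (hc : c.IsCycle)
    (hcr : s(Sum.inl v₁, Sum.inr v₂) ∈ c.edges) : g ≤ c.length := by
  have hEq : (JG G₁ G₂ u₁ v₁ u₂ v₂) = (JG G₁ G₂ v₁ u₁ v₂ u₂) := JG_swap.symm
  have hs : ∀ e ∈ c.edges, e ∈ (JG G₁ G₂ v₁ u₁ v₂ u₂).edgeSet := by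
    intro e he
    rw [← hEq]
    exact c.edges_subset_edgeSet he
  have := lower_u (G₁ := G₁) (u₁ := v₁) (v₁ := u₁) (u₂ := v₂) (v₂ := u₂) h₂.symm hg2
    (c := c.transfer _ hs) (hc.transfer hs) (by rw [Walk.edges_transfer]; exact hcr)
  rwa [Walk.length_transfer] at this

@[simp] lemma ι₁_coe : ⇑(ι₁ : G₁.deleteEdges {s(u₁, v₁)} →g JG G₁ G₂ u₁ v₁ u₂ v₂) = Sum.inl :=
  rfl

@[simp] lemma ι₂_coe : ⇑(ι₂ : G₂.deleteEdges {s(u₂, v₂)} →g JG G₁ G₂ u₁ v₁ u₂ v₂) = Sum.inr :=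
  rfl

lemma cycle_delete_to_base {V : Type*} {G : SimpleGraph V} {s : Set (Sym2 V)} {a : V}
    {c : (G.deleteEdges s).Walk a a} (hc : c.IsCycle) :
    ∃ c' : G.Walk a a, c'.IsCycle ∧ c'.length = c.length := by
  have hE : ∀ e ∈ c.edges, e ∈ G.edgeSet := by
    intro e he
    have := c.edges_subset_edgeSet he
    rw [edgeSet_deleteEdges] at this
    exact this.1
  exact ⟨c.transfer G hE, hc.transfer hE, c.length_transfer hE⟩

lemma JG_egirth {g : ℕ} (h₁ : G₁.Adj u₁ v₁) (h₂ : G₂.Adj u₂ v₂)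
    (hg1 : G₁.egirth = (g : ℕ∞)) (hg2 : G₂.egirth = (g : ℕ∞))
    {a : V₁} {c₁ : (G₁.deleteEdges {s(u₁, v₁)}).Walk a a} (hc₁ : c₁.IsCycle)
    (hlen₁ : c₁.length = g) :
    (JG G₁ G₂ u₁ v₁ u₂ v₂).egirth = (g : ℕ∞) := by
  apply le_antisymm
  · have hcy : (c₁.map (ι₁ (G₂ := G₂) (u₂ := u₂) (v₂ := v₂))).IsCycle := by
      rw [Walk.map_isCycle_iff_of_injective (fun x y hxy => Sum.inl.inj hxy)]
      exact hc₁
    have := egirth_le_length hcy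
    rwa [Walk.length_map, hlen₁] at this
  · rw [le_egirth]
    intro x w hw
    suffices h : g ≤ w.length by exact_mod_cast h
    by_cases hcu : s(Sum.inl u₁, Sum.inr u₂) ∈ w.edges
    · exact lower_u h₂ hg2 hw hcu
    by_cases hcv : s(Sum.inl v₁, Sum.inr v₂) ∈ w.edges
    · exact lower_v h₂ hg2 hw hcv
    have hside := no_cross_same_side w hcu hcv
    rcases x with a' | a'
    · obtain ⟨p, hp⟩ := pull_l w (fun z hz => by
        have := hside z hz
        cases z with
        | inl _ => rfl
        | inr _ => simp at this) rfl rfl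
      rw [Walk.copy_rfl_rfl] at hp
      have hpc : p.IsCycle := by
        rw [← hp] at hw
        exact (Walk.map_isCycle_iff_of_injective (fun x y hxy => Sum.inl.inj hxy)).1 hw
      have hplen : p.length = w.length := by
        have := congrArg Walk.length hp
        rwa [Walk.length_map] at this
      obtain ⟨c', hc', hlen'⟩ := cycle_delete_to_base hpc
      have := egirth_le_length hc'
      rw [hg1] at this
      have hgl : g ≤ c'.length := by exact_mod_cast this
      omega
    · obtain ⟨p, hp⟩ := pull_r w (fun z hz => by
        have := hside z hz
        cases z with
        | inl _ => simp at this
        | inr _ => rfl) rfl rfl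
      rw [Walk.copy_rfl_rfl] at hp
      have hpc : p.IsCycle := by
        rw [← hp] at hw
        exact (Walk.map_isCycle_iff_of_injective (fun x y hxy => Sum.inr.inj hxy)).1 hw
      have hplen : p.length = w.length := by
        have := congrArg Walk.length hp
        rwa [Walk.length_map] at this
      obtain ⟨c', hc', hlen'⟩ := cycle_delete_to_base hpc
      have := egirth_le_length hc'
      rw [hg2] at this
      have hgl : g ≤ c'.length := by exact_mod_cast this
      omega

lemma ncard_insert_image {W : Type*} [Fintype W] {T : Type*} {S : Set W} {f : W → T}
    (hf : Function.Injective f) {t : T} (ht : t ∉ f '' S) :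
    (f '' S ∪ {t}).ncard = S.ncard + 1 := by
  rw [Set.ncard_union_eq (by simpa using Set.disjoint_singleton_right.2 ht)
    (Set.toFinite _) (Set.toFinite _), Set.ncard_image_of_injective _ hf,
    Set.ncard_singleton]

lemma JG_regular [Fintype V₁] [Fintype V₂] {k : ℕ} (hk : 1 ≤ k)
    (h₁ : G₁.Adj u₁ v₁) (h₂ : G₂.Adj u₂ v₂)
    (hd₁ : ∀ x, (G₁.neighborSet x).ncard = k) (hd₂ : ∀ x, (G₂.neighborSet x).ncard = k) :
    ∀ x, ((JG G₁ G₂ u₁ v₁ u₂ v₂).neighborSet x).ncard = k := by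
  have hne1 : u₁ ≠ v₁ := h₁.ne
  have hne2 : u₂ ≠ v₂ := h₂.ne
  rintro (a | a)
  · by_cases hau : a = u₁
    · rw [hau]
      have hNS : (JG G₁ G₂ u₁ v₁ u₂ v₂).neighborSet (Sum.inl u₁)
          = Sum.inl '' (G₁.neighborSet u₁ \ {v₁}) ∪ {Sum.inr u₂} := by
        ext y
        rcases y with b | b <;>
          simp only [mem_neighborSet, JG_adj_ll, JG_adj_lr, Set.mem_union, Set.mem_image,
            Set.mem_diff, Set.mem_singleton_iff, Sym2.eq_iff, ne_eq, Sum.inl.injEq,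
            reduceCtorEq, exists_eq_right, and_false, false_and, exists_false, or_false,
            false_or, Sum.inr.injEq] <;> tauto
      have hdm : (G₁.neighborSet u₁ \ {v₁}).ncard = k - 1 := by
        rw [Set.ncard_diff_singleton_of_mem (by exact h₁), hd₁]
      rw [hNS, ncard_insert_image Sum.inl_injective (by simp), hdm]
      omega
    · by_cases hav : a = v₁
      · rw [hav]
        have hNS : (JG G₁ G₂ u₁ v₁ u₂ v₂).neighborSet (Sum.inl v₁)
            = Sum.inl '' (G₁.neighborSet v₁ \ {u₁}) ∪ {Sum.inr v₂} := by
          ext y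
          rcases y with b | b <;>
            simp only [mem_neighborSet, JG_adj_ll, JG_adj_lr, Set.mem_union, Set.mem_image,
              Set.mem_diff, Set.mem_singleton_iff, Sym2.eq_iff, ne_eq, Sum.inl.injEq,
              reduceCtorEq, exists_eq_right, and_false, false_and, exists_false, or_false,
              false_or, Sum.inr.injEq] <;> tauto
        have hdm : (G₁.neighborSet v₁ \ {u₁}).ncard = k - 1 := by
          rw [Set.ncard_diff_singleton_of_mem (by exact h₁.symm), hd₁]
        rw [hNS, ncard_insert_image Sum.inl_injective (by simp), hdm]
        omega
      · have hNS : (JG G₁ G₂ u₁ v₁ u₂ v₂).neighborSet (Sum.inl a)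
            = Sum.inl '' (G₁.neighborSet a) := by
          ext y
          rcases y with b | b <;>
            simp only [mem_neighborSet, JG_adj_ll, JG_adj_lr, Set.mem_image, Sym2.eq_iff,
              ne_eq, Sum.inl.injEq, reduceCtorEq, exists_eq_right, exists_false,
              iff_false, not_or, not_and, Sum.inr.injEq] <;> tauto
        rw [hNS, Set.ncard_image_of_injective _ Sum.inl_injective, hd₁]
  · by_cases hau : a = u₂
    · rw [hau]
      have hNS : (JG G₁ G₂ u₁ v₁ u₂ v₂).neighborSet (Sum.inr u₂)
          = Sum.inr '' (G₂.neighborSet u₂ \ {v₂}) ∪ {Sum.inl u₁} := by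
        ext y
        rcases y with b | b <;>
          simp only [mem_neighborSet, JG_adj_rr, JG_adj_rl, Set.mem_union, Set.mem_image,
            Set.mem_diff, Set.mem_singleton_iff, Sym2.eq_iff, ne_eq, Sum.inr.injEq,
            reduceCtorEq, exists_eq_right, and_false, false_and, exists_false, or_false,
            false_or, Sum.inl.injEq] <;> tauto
      have hdm : (G₂.neighborSet u₂ \ {v₂}).ncard = k - 1 := by
        rw [Set.ncard_diff_singleton_of_mem (by exact h₂), hd₂]
      rw [hNS, ncard_insert_image Sum.inr_injective (by simp), hdm]
      omega
    · by_cases hav : a = v₂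
      · rw [hav]
        have hNS : (JG G₁ G₂ u₁ v₁ u₂ v₂).neighborSet (Sum.inr v₂)
            = Sum.inr '' (G₂.neighborSet v₂ \ {u₂}) ∪ {Sum.inl v₁} := by
          ext y
          rcases y with b | b <;>
            simp only [mem_neighborSet, JG_adj_rr, JG_adj_rl, Set.mem_union, Set.mem_image,
              Set.mem_diff, Set.mem_singleton_iff, Sym2.eq_iff, ne_eq, Sum.inr.injEq,
              reduceCtorEq, exists_eq_right, and_false, false_and, exists_false, or_false,
              false_or, Sum.inl.injEq] <;> tauto
        have hdm : (G₂.neighborSet v₂ \ {u₂}).ncard = k - 1 := by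
          rw [Set.ncard_diff_singleton_of_mem (by exact h₂.symm), hd₂]
        rw [hNS, ncard_insert_image Sum.inr_injective (by simp), hdm]
        omega
      · have hNS : (JG G₁ G₂ u₁ v₁ u₂ v₂).neighborSet (Sum.inr a)
            = Sum.inr '' (G₂.neighborSet a) := by
          ext y
          rcases y with b | b <;>
            simp only [mem_neighborSet, JG_adj_rr, JG_adj_rl, Set.mem_image, Sym2.eq_iff,
              ne_eq, Sum.inr.injEq, reduceCtorEq, exists_eq_right, exists_false,
              iff_false, not_or, not_and, Sum.inl.injEq] <;> tauto
        rw [hNS, Set.ncard_image_of_injective _ Sum.inr_injective, hd₂]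

lemma JG_connected (h₁ : G₁.Adj u₁ v₁)
    (hc₁ : (G₁.deleteEdges {s(u₁, v₁)}).Connected)
    (hc₂ : (G₂.deleteEdges {s(u₂, v₂)}).Connected) :
    (JG G₁ G₂ u₁ v₁ u₂ v₂).Connected := by
  rw [connected_iff_exists_forall_reachable]
  refine ⟨Sum.inl u₁, ?_⟩
  rintro (a | a)
  · exact Reachable.map ι₁ (hc₁.preconnected u₁ a)
  · have hr2 : (JG G₁ G₂ u₁ v₁ u₂ v₂).Reachable (Sum.inr u₂) (Sum.inr a) :=
      Reachable.map ι₂ (hc₂.preconnected u₂ a)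
    exact (Adj.reachable (JG_adj_lr.2 (Or.inl ⟨rfl, rfl⟩))).trans hr2

lemma egirth_iso {V W : Type*} {G : SimpleGraph V} {H : SimpleGraph W} (f : G ≃g H) :
    G.egirth = H.egirth := by
  apply le_antisymm
  · rw [le_egirth]
    intro a w hw
    have hc : (w.map f.symm.toHom).IsCycle :=
      (Walk.map_isCycle_iff_of_injective f.symm.injective).2 hw
    calc G.egirth ≤ (w.map f.symm.toHom).length := egirth_le_length hc
      _ = w.length := by rw [Walk.length_map]
  · rw [le_egirth]
    intro a w hw
    have hc : (w.map f.toHom).IsCycle :=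
      (Walk.map_isCycle_iff_of_injective f.injective).2 hw
    calc H.egirth ≤ (w.map f.toHom).length := egirth_le_length hc
      _ = w.length := by rw [Walk.length_map]

end KGAux

/-- The `(k,g)`-spectrum: the set of orders of connected `k`-regular graphs of girth
exactly `g`. -/
def kgSpectrum (k g : ℕ) : Set ℕ :=
  {n | ∃ G : SimpleGraph (Fin n), G.Connected ∧ (∀ v, (G.neighborSet v).ncard = k) ∧
    G.egirth = g}

/-- For `k ≥ 3` and `g ≥ 3`, the `(k,g)`-spectrum is closed under addition. -/
theorem stmt_4 (k g : ℕ) (hk : 3 ≤ k) (hg : 3 ≤ g) (n₁ n₂ : ℕ)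
    (h₁ : n₁ ∈ kgSpectrum k g) (h₂ : n₂ ∈ kgSpectrum k g) :
    n₁ + n₂ ∈ kgSpectrum k g := by
  classical
  obtain ⟨Gr1, hc1, hd1, hg1⟩ := h₁
  obtain ⟨Gr2, hc2, hd2, hg2⟩ := h₂
  have hdeg1 : ∀ x, 3 ≤ (Gr1.neighborSet x).ncard := fun x => by rw [hd1 x]; exact hk
  have hdeg2 : ∀ x, 3 ≤ (Gr2.neighborSet x).ncard := fun x => by rw [hd2 x]; exact hk
  -- a good edge on side 1: non-bridge whose removal keeps a `g`-cycle
  obtain ⟨u₁, v₁, huv₁, hconn₁, a, c₁, hc₁cyc, hc₁len⟩ :=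
    KGAux.exists_good_edge hg hc1 hdeg1 hg1
  -- a non-bridge edge on side 2
  have hnac2 : ¬Gr2.IsAcyclic := by
    rw [← egirth_eq_top, hg2]
    simp
  obtain ⟨b₀, c₂, hc₂cyc, -⟩ := exists_egirth_eq_length.2 hnac2
  have hne : c₂.edges ≠ [] := by
    have := hc₂cyc.three_le_length
    intro h
    rw [← c₂.length_edges, h] at this
    simp at this
  obtain ⟨e, he⟩ := List.exists_mem_of_ne_nil _ hne
  obtain ⟨u₂, v₂, rfl⟩ : ∃ x y, e = s(x, y) := by
    induction e with
    | h x y => exact ⟨x, y, rfl⟩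
  have hadj₂ : Gr2.Adj u₂ v₂ := c₂.adj_of_mem_edges he
  have hreach₂ : (Gr2.deleteEdges {s(u₂, v₂)}).Reachable u₂ v₂ :=
    (adj_and_reachable_delete_edges_iff_exists_cycle.2 ⟨b₀, c₂, hc₂cyc, he⟩).2
  have hconn₂ : (Gr2.deleteEdges {s(u₂, v₂)}).Connected :=
    KGAux.connected_deleteEdges hc2 hreach₂
  -- the junction graph
  set H := KGAux.JG Gr1 Gr2 u₁ v₁ u₂ v₂ with hH
  have hHconn : H.Connected := KGAux.JG_connected huv₁ hconn₁ hconn₂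
  have hHreg : ∀ x, (H.neighborSet x).ncard = k :=
    KGAux.JG_regular (by omega) huv₁ hadj₂ hd1 hd2
  have hHgirth : H.egirth = (g : ℕ∞) :=
    KGAux.JG_egirth huv₁ hadj₂ hg1 hg2 hc₁cyc hc₁len
  -- transport along `finSumFinEquiv`
  set eq : Fin n₁ ⊕ Fin n₂ ≃ Fin (n₁ + n₂) := finSumFinEquiv with heq
  set Gfin : SimpleGraph (Fin (n₁ + n₂)) := SimpleGraph.map eq.toEmbedding H with hGfin
  set iso : H ≃g Gfin := SimpleGraph.Iso.map eq H with hiso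
  refine ⟨Gfin, ?_, ?_, ?_⟩
  · rw [connected_iff]
    exact ⟨(iso.preconnected_iff).1 hHconn.preconnected, ⟨iso (Sum.inl u₁)⟩⟩
  · intro v
    have h3 : iso (iso.symm v) = v := iso.toEquiv.apply_symm_apply v
    have h2 : (H.neighborSet (iso.symm v)).ncard
        = (Gfin.neighborSet (iso (iso.symm v))).ncard := by
      rw [← Nat.card_coe_set_eq, ← Nat.card_coe_set_eq]
      exact Nat.card_congr (Iso.mapNeighborSet iso _)
    rw [← h3, ← h2]
    exact hHreg _
  · rw [← KGAux.egirth_iso iso]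
    exact hHgirth
end

section
/- Every k-regular graph of even girth g ≥ 4 has at least 2·∑_{i=0}^{(g−2)/2}(k−1)^i vertices (the Moore bound for even girth). -/
open SimpleGraph Finset

section MooreAux

variable {V : Type*} [DecidableEq V]

lemma moore_master (G : SimpleGraph V) {n : ℕ} (hn : (n : ℕ∞) ≤ G.egirth)
    {a c b : V} (h : G.Adj a c) (p : G.Walk c b) (q : G.Walk a b)
    (hp : s(a,c) ∉ p.edges) (hq : s(a,c) ∉ q.edges) :
    n ≤ 1 + p.length + q.length := by
  set W : G.Walk c a := p.append q.reverse with hW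
  have hWe : s(a,c) ∉ W.edges := by
    rw [hW, Walk.edges_append, List.mem_append, Walk.edges_reverse, List.mem_reverse]
    tauto
  have hbp : s(a,c) ∉ W.bypass.edges := fun hx => hWe (W.edges_bypass_subset hx)
  have hcyc : (Walk.cons h W.bypass).IsCycle :=
    (Walk.cons_isCycle_iff _ h).mpr ⟨W.bypass_isPath, hbp⟩
  have h1 : G.egirth ≤ ((Walk.cons h W.bypass).length : ℕ∞) := by
    rw [egirth]
    exact iInf_le_of_le a (iInf_le_of_le _ (iInf_le_of_le hcyc le_rfl))
  have h2 : n ≤ (Walk.cons h W.bypass).length := by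
    exact_mod_cast hn.trans h1
  have h3 : W.bypass.length ≤ W.length := W.length_bypass_le
  have h4 : W.length = p.length + q.length := by
    rw [hW, Walk.length_append, Walk.length_reverse]
  simp only [Walk.length_cons] at h2
  omega

lemma moore_dist_lt (G : SimpleGraph V) {y u x : V} (p : G.Walk y u)
    (hx : x ∈ p.support) (hxy : x ≠ y) : G.dist x u < p.length := by
  have hsplit := congrArg Walk.length (p.take_spec hx)
  rw [Walk.length_append] at hsplit
  have h1 : 1 ≤ (p.takeUntil x hx).length := by
    by_contra hl
    push_neg at hl
    exact hxy (Walk.eq_of_length_eq_zero (Nat.lt_one_iff.mp hl)).symm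
  have h2 := G.dist_le (p.dropUntil x hx)
  omega

lemma moore_side [Fintype V] (G : SimpleGraph V) [DecidableRel G.Adj]
    {u v : V} (huv : G.Adj u v) {k r : ℕ}
    (hreg : ∀ w, (G.neighborFinset w).card = k)
    (hg : ((2*r+2 : ℕ) : ℕ∞) ≤ G.egirth) :
    ∀ i, i ≤ r →
      (k-1)^i ≤ (univ.filter fun x => G.dist u x = i ∧ G.dist v x = i+1).card := by
  set A : ℕ → Finset V := fun i => univ.filter (fun x => G.dist u x = i ∧ G.dist v x = i+1)
    with hA
  have hmemA : ∀ i x, x ∈ A i ↔ (G.dist u x = i ∧ G.dist v x = i+1) := by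
    intro i x; simp [hA]
  have walkTo : ∀ z : V, G.Reachable u z → ∃ p : G.Walk z u, p.length = G.dist u z := by
    intro z hz
    obtain ⟨p, hp⟩ := hz.symm.exists_walk_length_eq_dist
    exact ⟨p, by rw [hp, dist_comm]⟩
  have spFrom : ∀ a b : V, G.dist a b ≠ 0 → ∃ p : G.Walk a b, p.length = G.dist a b := by
    intro a b h
    exact (Reachable.of_dist_ne_zero h).exists_walk_length_eq_dist
  -- Fact 1: a vertex at level j has at most one neighbour at level ≤ j - 1
  have fact1 : ∀ j w y z, 1 ≤ j → j ≤ r → G.dist u w = j →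
      G.Adj w y → G.Adj w z → G.dist u y ≤ j - 1 → G.dist u z ≤ j - 1 → y = z := by
    intro j w y z hj hjr hw hwy hwz hy hz
    by_contra hne
    have hruw : G.Reachable u w := Reachable.of_dist_ne_zero (by rw [hw]; omega)
    obtain ⟨p0, hp0⟩ := walkTo z (hruw.trans hwz.reachable)
    obtain ⟨p1, hp1⟩ := walkTo y (hruw.trans hwy.reachable)
    have hwz' : w ≠ z := by rintro rfl; omega
    have hwy' : w ≠ y := by rintro rfl; omega
    have key := moore_master G hg hwz p0 (Walk.cons hwy p1) ?_ ?_
    · rw [Walk.length_cons] at key; omega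
    · intro hmem
      have hsupp := Walk.fst_mem_support_of_mem_edges p0 hmem
      have := moore_dist_lt G p0 hsupp hwz'
      rw [dist_comm] at this; omega
    · intro hmem
      rw [Walk.edges_cons, List.mem_cons] at hmem
      rcases hmem with hmem | hmem
      · rw [Sym2.eq_iff] at hmem
        rcases hmem with ⟨-, rfl⟩ | ⟨rfl, rfl⟩
        · exact hne rfl
        · omega
      · have hsupp := Walk.fst_mem_support_of_mem_edges p1 hmem
        have := moore_dist_lt G p1 hsupp hwy'
        rw [dist_comm] at this; omega
  -- Fact 2: no edges within a level
  have fact2 : ∀ j w x, 1 ≤ j → j ≤ r → G.dist u w = j → G.dist u x = j → ¬ G.Adj w x := by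
    intro j w x hj hjr hw hx hadj
    have hruw : G.Reachable u w := Reachable.of_dist_ne_zero (by rw [hw]; omega)
    obtain ⟨p0, hp0⟩ := walkTo x (hruw.trans hadj.reachable)
    obtain ⟨p1, hp1⟩ := walkTo w hruw
    have key := moore_master G hg hadj p0 p1 ?_ ?_
    · omega
    · intro hmem
      have hsupp := Walk.fst_mem_support_of_mem_edges p0 hmem
      have := moore_dist_lt G p0 hsupp hadj.ne
      rw [dist_comm] at this; omega
    · intro hmem
      have hsupp := Walk.snd_mem_support_of_mem_edges p1 hmem
      have := moore_dist_lt G p1 hsupp hadj.ne.symm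
      rw [dist_comm] at this; omega
  -- Fact 3
  have fact3 : ∀ i w x, 1 ≤ i → i + 1 ≤ r → G.dist u w = i → G.dist v w = i+1 →
      G.Adj w x → G.dist u x = i+1 → G.dist v x = i → False := by
    intro i w x hi hir hw hvw hadj hux hvx
    obtain ⟨p, hp⟩ := spFrom v x (by omega)
    obtain ⟨q0, hq0⟩ := spFrom u w (by omega)
    have key := moore_master G hg huv p (q0.concat hadj) ?_ ?_
    · rw [Walk.length_concat] at key; omega
    · intro hmem
      have hsupp := Walk.fst_mem_support_of_mem_edges p hmem
      have := moore_dist_lt G p hsupp huv.ne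
      omega
    · intro hmem
      rw [Walk.edges_concat, List.concat_eq_append, List.mem_append, List.mem_singleton] at hmem
      rcases hmem with hmem | hmem
      · have hsupp := Walk.snd_mem_support_of_mem_edges q0 hmem
        have := moore_dist_lt G q0 hsupp huv.ne.symm
        omega
      · rw [Sym2.eq_iff] at hmem
        rcases hmem with ⟨h1, h2⟩ | ⟨h1, h2⟩
        · rw [← h1, SimpleGraph.dist_self] at hw; omega
        · rw [← h1, SimpleGraph.dist_self] at hux; omega
  -- Fact 4
  have fact4 : ∀ i x, i + 1 ≤ r → G.dist u x = i+1 → G.dist v x = i+1 → False := by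
    intro i x hir hux hvx
    obtain ⟨p, hp⟩ := spFrom v x (by omega)
    obtain ⟨q, hq⟩ := spFrom u x (by omega)
    have key := moore_master G hg huv p q ?_ ?_
    · omega
    · intro hmem
      have hsupp := Walk.fst_mem_support_of_mem_edges p hmem
      have := moore_dist_lt G p hsupp huv.ne
      omega
    · intro hmem
      have hsupp := Walk.snd_mem_support_of_mem_edges q hmem
      have := moore_dist_lt G q hsupp huv.ne.symm
      omega
  -- each vertex of `A i` has at least `k - 1` neighbours in `A (i+1)`
  have step : ∀ i, i + 1 ≤ r → ∀ w ∈ A i, k - 1 ≤ ((A (i+1)).filter (fun x => G.Adj w x)).card := by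
    intro i hir w hw
    rw [hmemA] at hw
    obtain ⟨hw1, hw2⟩ := hw
    have hN := hreg w
    have hpart : ((G.neighborFinset w).filter (fun x => x ∈ A (i+1))).card +
        ((G.neighborFinset w).filter (fun x => x ∉ A (i+1))).card = k := by
      rw [← hreg w]
      exact Finset.card_filter_add_card_filter_not (fun x => x ∈ A (i+1))
    have hbad : ((G.neighborFinset w).filter (fun x => x ∉ A (i+1))).card ≤ 1 := by
      rw [Finset.card_le_one]
      rcases Nat.eq_zero_or_pos i with hi0 | hipos
      · -- i = 0 : every bad neighbour is v
        subst hi0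
        have hruw : G.Reachable u w :=
          (huv.reachable.trans (Reachable.of_dist_ne_zero (by omega)))
        have hwu : w = u := (hruw.symm).dist_eq_zero_iff.mp
          (by rw [SimpleGraph.dist_comm]; exact hw1)
        subst hwu
        have hbv : ∀ x ∈ (G.neighborFinset w).filter (fun x => x ∉ A 1), x = v := by
          intro x hx
          rw [Finset.mem_filter, mem_neighborFinset] at hx
          obtain ⟨hadj, hnot⟩ := hx
          by_contra hxv
          have hux : G.dist w x = 1 := dist_eq_one_iff_adj.mpr hadj
          have hrvx : G.Reachable v x := (huv.symm.reachable.trans hadj.reachable)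
          have hvx0 : G.dist v x ≠ 0 := fun h0 => hxv (hrvx.dist_eq_zero_iff.mp h0).symm
          have hvx2 : G.dist v x ≤ 2 := by
            simpa using G.dist_le (Walk.cons huv.symm (Walk.cons hadj Walk.nil))
          have hvx1 : G.dist v x ≠ 1 := by
            intro h1
            exact fact4 0 x (by omega) hux h1
          exact hnot ((hmemA 1 x).mpr ⟨hux, by omega⟩)
        intro a ha b hb
        rw [hbv a ha, hbv b hb]
      · -- i ≥ 1 : every bad neighbour is at level ≤ i - 1
        have hlow : ∀ x ∈ (G.neighborFinset w).filter (fun x => x ∉ A (i+1)),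
            G.dist u x ≤ i - 1 := by
          intro x hx
          rw [Finset.mem_filter, mem_neighborFinset] at hx
          obtain ⟨hadj, hnot⟩ := hx
          by_contra hhigh
          push_neg at hhigh
          have hruw : G.Reachable u w := Reachable.of_dist_ne_zero (by omega)
          have hrux : G.Reachable u x := hruw.trans hadj.reachable
          have hub : G.dist u x ≤ i + 1 := by
            obtain ⟨p, hp⟩ := spFrom u w (by omega)
            have := G.dist_le (p.concat hadj)
            rw [Walk.length_concat] at this; omega
          have hux : G.dist u x = i ∨ G.dist u x = i + 1 := by omega
          rcases hux with hux | hux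
          · exact fact2 i w x hipos (by omega) hw1 hux hadj
          · have hrvw : G.Reachable v w := Reachable.of_dist_ne_zero (by omega)
            have hvub : G.dist v x ≤ i + 2 := by
              obtain ⟨p, hp⟩ := spFrom v w (by omega)
              have := G.dist_le (p.concat hadj)
              rw [Walk.length_concat] at this; omega
            have hvlb : G.dist v w ≤ G.dist v x + 1 := by
              rcases Nat.eq_zero_or_pos (G.dist v x) with h0 | hpos
              · have : x = v := ((hrvw.trans hadj.reachable).symm).dist_eq_zero_iff.mp
                  (by rw [SimpleGraph.dist_comm]; exact h0)
                subst this
                have := dist_eq_one_iff_adj.mpr hadj.symm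
                omega
              · obtain ⟨p, hp⟩ := spFrom v x (by omega)
                have := G.dist_le (p.concat hadj.symm)
                rw [Walk.length_concat] at this; omega
            have hvx : G.dist v x = i ∨ G.dist v x = i + 1 ∨ G.dist v x = i + 2 := by omega
            rcases hvx with hvx | hvx | hvx
            · exact fact3 i w x hipos hir hw1 hw2 hadj hux hvx
            · exact fact4 i x hir hux hvx
            · exact hnot ((hmemA (i+1) x).mpr ⟨hux, by omega⟩)
        intro a ha b hb
        have ha' := ha; have hb' := hb
        rw [Finset.mem_filter, mem_neighborFinset] at ha' hb'
        exact fact1 i w a b hipos (by omega) hw1 ha'.1 hb'.1 (hlow a ha) (hlow b hb)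
    have hgood : k - 1 ≤ ((G.neighborFinset w).filter (fun x => x ∈ A (i+1))).card := by
      omega
    refine hgood.trans (Finset.card_le_card ?_)
    intro x hx
    rw [Finset.mem_filter, mem_neighborFinset] at hx
    rw [Finset.mem_filter]
    exact ⟨hx.2, hx.1⟩
  -- induction
  intro i
  induction i with
  | zero =>
    intro _
    have hu : u ∈ A 0 := (hmemA 0 u).mpr ⟨G.dist_self, dist_eq_one_iff_adj.mpr huv.symm⟩
    rw [pow_zero]
    exact Finset.card_pos.mpr ⟨u, hu⟩
  | succ i ih =>
    intro hir
    have hcount := Finset.card_mul_le_card_mul (fun a b => G.Adj a b)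
      (s := A i) (t := A (i+1)) (m := k-1) (n := 1)
      (fun a ha => step i hir a ha)
      ?_
    · calc (k-1)^(i+1) = (k-1)^i * (k-1) := pow_succ _ _
        _ ≤ (A i).card * (k-1) := Nat.mul_le_mul_right _ (ih (by omega))
        _ ≤ (A (i+1)).card * 1 := hcount
        _ = (A (i+1)).card := mul_one _
    · intro b hb
      rw [Finset.card_le_one]
      intro x hx y hy
      rw [Finset.mem_bipartiteBelow] at hx hy
      rw [hmemA] at hb
      obtain ⟨hx1, hx2⟩ := hx
      obtain ⟨hy1, hy2⟩ := hy
      rw [hmemA] at hx1 hy1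
      exact fact1 (i+1) b x y (by omega) hir hb.1 hx2.symm hy2.symm
        (by omega) (by omega)


end MooreAux

/-- Moore bound for even girth: every `k`-regular graph of even girth `g ≥ 4` has at least
`2·∑_{i=0}^{(g-2)/2} (k-1)^i` vertices. -/
theorem stmt_10 {V : Type*} [Fintype V] (G : SimpleGraph V) (k g : ℕ) (hg : 4 ≤ g)
    (heven : Even g) (hreg : ∀ v, (G.neighborSet v).ncard = k) (hgirth : G.egirth = g) :
    2 * ∑ i ∈ Finset.range ((g - 2) / 2 + 1), (k - 1) ^ i ≤ Fintype.card V := by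
  classical
  have hnac : ¬ G.IsAcyclic := by
    intro h
    have h2 := h.egirth_eq_top
    rw [hgirth] at h2
    exact (ENat.coe_ne_top g) h2
  obtain ⟨a, w, hw, hlen⟩ := exists_egirth_eq_length.mpr hnac
  have h3 := hw.three_le_length
  cases w with
  | nil => simp at h3
  | @cons _ b _ huv p =>
  set r : ℕ := (g - 2) / 2 with hrdef
  obtain ⟨m, hm⟩ := heven
  have hr : 2 * r + 2 = g := by omega
  have hg2 : ((2 * r + 2 : ℕ) : ℕ∞) ≤ G.egirth := by
    rw [hgirth]
    exact Nat.cast_le.mpr (le_of_eq hr)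
  have hreg' : ∀ w, (G.neighborFinset w).card = k := by
    intro w
    rw [neighborFinset_def, ← Set.ncard_eq_toFinset_card']
    exact hreg w
  have hAcard := moore_side G huv hreg' hg2
  have hBcard := moore_side G huv.symm hreg' hg2
  set A : ℕ → Finset V :=
    fun i => Finset.univ.filter fun x => G.dist a x = i ∧ G.dist b x = i+1 with hAdef
  set B : ℕ → Finset V :=
    fun i => Finset.univ.filter fun x => G.dist b x = i ∧ G.dist a x = i+1 with hBdef
  have hsum : ∑ i ∈ Finset.range (r+1), (A i ∪ B i).card ≤ Fintype.card V := by
    rw [← Finset.card_biUnion ?_]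
    · exact Finset.card_le_univ _
    · intro i hi j hj hij
      rw [Function.onFun, Finset.disjoint_left]
      intro x hx hx'
      simp only [hAdef, hBdef, Finset.mem_union, Finset.mem_filter, Finset.mem_univ,
        true_and] at hx hx'
      omega
  calc 2 * ∑ i ∈ Finset.range (r+1), (k-1)^i
      = ∑ i ∈ Finset.range (r+1), 2 * (k-1)^i := by rw [Finset.mul_sum]
    _ ≤ ∑ i ∈ Finset.range (r+1), (A i ∪ B i).card := by
        refine Finset.sum_le_sum fun i hi => ?_
        rw [Finset.mem_range] at hi
        have h1 : (k-1)^i ≤ (A i).card := hAcard i (by omega)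
        have h2 : (k-1)^i ≤ (B i).card := hBcard i (by omega)
        have hdisj : Disjoint (A i) (B i) := by
          rw [Finset.disjoint_left]
          intro x hx hx'
          simp only [hAdef, hBdef, Finset.mem_filter] at hx hx'
          omega
        rw [Finset.card_union_of_disjoint hdisj]
        omega
    _ ≤ Fintype.card V := hsum
end
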